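/- arXiv:0810.3146 — 6 statements merged into one kernel-verified Lean document; each statement's English description precedes it below -/
import Mathlib

section
/- Skein relation, knot version (Lemma of Section 5.1, equation (1)): Let G_+ be a one-circle based Gauss diagram with a distinguished arrow x whose sign is +1. Let G_- be the one-circle based Gauss diagram obtained from G_+ by interchanging the tail and the head of x and replacing the sign of x by -1 (all other arrows and signs unchanged), and let G_0 be the smoothing of G_+ along x. Then for every n ≥ 1 one has F_{2n}(G_+) − F_{2n}(G_-) = F_{2n−1}(G_0). -/
open Finset

/-- The cyclic successor on `Fin m`. -/
def cycSucc {m : ℕ} (x : Fin m) : Fin m :=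
  ⟨((x : ℕ) + 1) % m, Nat.mod_lt _ x.pos⟩

/-- A based Gauss diagram on one circle with `n` arrows: the `2n` endpoint
positions are read counterclockwise starting just after the base point;
`t i` is the tail and `h i` the head of arrow `i`, all endpoints are pairwise
distinct, and `ε i ∈ {1, -1}` is the sign of arrow `i`. -/
structure GaussDiagram (n : ℕ) where
  t : Fin n → Fin (2 * n)
  h : Fin n → Fin (2 * n)
  inj : Function.Injective (Sum.elim t h)
  ε : Fin n → ℤ
  sign : ∀ i, ε i = 1 ∨ ε i = -1

namespace GaussDiagram

variable {n : ℕ}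

/-- The bijection between arrow-ends and endpoint positions. -/
noncomputable def ends (G : GaussDiagram n) : (Fin n ⊕ Fin n) ≃ Fin (2 * n) :=
  Equiv.ofBijective (Sum.elim G.t G.h)
    ((Fintype.bijective_iff_injective_and_card _).mpr ⟨G.inj, by simp [two_mul]⟩)

/-- The involution `μ` exchanging the tail and the head of each arrow. -/
noncomputable def mu (G : GaussDiagram n) (x : Fin (2 * n)) : Fin (2 * n) :=
  G.ends (Sum.swap (G.ends.symm x))

/-- `σ x = μ x + 1 (mod 2n)`. -/
noncomputable def sigma (G : GaussDiagram n) (x : Fin (2 * n)) : Fin (2 * n) :=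
  ⟨((G.mu x : ℕ) + 1) % (2 * n), Nat.mod_lt _ x.pos⟩

/-- `G` is one-component iff `σ` is a single cycle of length `2n`,
i.e. the `σ`-orbit of any position is everything. -/
def OneComponent (G : GaussDiagram n) : Prop :=
  ∀ x y : Fin (2 * n), ∃ k : ℕ, (G.sigma)^[k] x = y

open Classical in
/-- The visit time of a position: the least `k` with `σ^[k] 0 = x`
(junk value `0` if there is none). -/
noncomputable def tau (G : GaussDiagram n) (x : Fin (2 * n)) : ℕ :=
  if hx : ∃ k : ℕ, (G.sigma)^[k] ⟨0, x.pos⟩ = x then Nat.find hx else 0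

/-- `G` is ascending iff for every arrow the tail is visited before the head. -/
def Ascending (G : GaussDiagram n) : Prop :=
  ∀ i : Fin n, G.tau (G.t i) < G.tau (G.h i)

lemma t_injective (G : GaussDiagram n) : Function.Injective G.t := fun i j hij => by
  have := @G.inj (Sum.inl i) (Sum.inl j) hij
  simpa using this

lemma h_injective (G : GaussDiagram n) : Function.Injective G.h := fun i j hij => by
  have := @G.inj (Sum.inr i) (Sum.inr j) hij
  simpa using this

lemma t_ne_h (G : GaussDiagram n) (i j : Fin n) : G.t i ≠ G.h j := fun e => by
  have := @G.inj (Sum.inl i) (Sum.inr j) e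
  simp at this

/-- The set of endpoint positions of the arrows in `S`. -/
def posSet (G : GaussDiagram n) (S : Finset (Fin n)) : Finset (Fin (2 * n)) :=
  S.image G.t ∪ S.image G.h

lemma posSet_card (G : GaussDiagram n) (S : Finset (Fin n)) :
    (G.posSet S).card = 2 * S.card := by
  rw [posSet, card_union_of_disjoint, card_image_of_injective _ G.t_injective,
    card_image_of_injective _ G.h_injective, two_mul]
  rw [disjoint_left]
  rintro a ha hb
  simp only [mem_image] at ha hb
  obtain ⟨i, -, rfl⟩ := ha
  obtain ⟨j, -, hj⟩ := hb
  exact G.t_ne_h i j hj.symm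

lemma mem_posSet_t (G : GaussDiagram n) {S : Finset (Fin n)} {i : Fin n} (hi : i ∈ S) :
    G.t i ∈ G.posSet S := mem_union_left _ (mem_image_of_mem _ hi)

lemma mem_posSet_h (G : GaussDiagram n) {S : Finset (Fin n)} {i : Fin n} (hi : i ∈ S) :
    G.h i ∈ G.posSet S := mem_union_right _ (mem_image_of_mem _ hi)

/-- The sub-diagram consisting of the arrows of `S` alone, with the endpoint
positions renumbered preserving their order. -/
noncomputable def sub (G : GaussDiagram n) (S : Finset (Fin n)) : GaussDiagram S.card where
  t j := ((G.posSet S).orderIsoOfFin (G.posSet_card S)).symm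
    ⟨G.t (S.orderIsoOfFin rfl j), G.mem_posSet_t (S.orderIsoOfFin rfl j).2⟩
  h j := ((G.posSet S).orderIsoOfFin (G.posSet_card S)).symm
    ⟨G.h (S.orderIsoOfFin rfl j), G.mem_posSet_h (S.orderIsoOfFin rfl j).2⟩
  ε j := G.ε (S.orderIsoOfFin rfl j)
  sign j := G.sign _
  inj := by
    have hP : Function.Injective ((G.posSet S).orderIsoOfFin (G.posSet_card S)).symm :=
      (OrderIso.injective _)
    have hA : Function.Injective (S.orderIsoOfFin rfl) := OrderIso.injective _
    rintro (i | i) (j | j) hij <;> simp only [Sum.elim_inl, Sum.elim_inr] at hij <;>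
      have h1 := congrArg Subtype.val (hP hij)
    · have h2 := @G.inj (Sum.inl (S.orderIsoOfFin rfl i))
        (Sum.inl (S.orderIsoOfFin rfl j)) h1
      simp only [Sum.inl.injEq] at h2
      exact congrArg Sum.inl (hA (Subtype.ext h2))
    · have h2 := @G.inj (Sum.inl (S.orderIsoOfFin rfl i))
        (Sum.inr (S.orderIsoOfFin rfl j)) h1
      simp at h2
    · have h2 := @G.inj (Sum.inr (S.orderIsoOfFin rfl i))
        (Sum.inl (S.orderIsoOfFin rfl j)) h1
      simp at h2
    · have h2 := @G.inj (Sum.inr (S.orderIsoOfFin rfl i))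
        (Sum.inr (S.orderIsoOfFin rfl j)) h1
      simp only [Sum.inr.injEq] at h2
      exact congrArg Sum.inr (hA (Subtype.ext h2))

/-- A subset `S` of the arrows is one-component if the sub-diagram on `S` is. -/
def OneComponentSub (G : GaussDiagram n) (S : Finset (Fin n)) : Prop :=
  (G.sub S).OneComponent

/-- A subset `S` of the arrows is ascending if the sub-diagram on `S` is. -/
def AscendingSub (G : GaussDiagram n) (S : Finset (Fin n)) : Prop :=
  (G.sub S).Ascending

open Classical in
/-- `F k G` is the sum over all one-component ascending subsets `S` of the
arrows with `|S| = k` of the product of the signs of the arrows in `S`. -/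
noncomputable def F (G : GaussDiagram n) (k : ℕ) : ℤ :=
  ∑ S : Finset (Fin n),
    if S.card = k ∧ G.OneComponentSub S ∧ G.AscendingSub S then ∏ i ∈ S, G.ε i else 0

end GaussDiagram

/-- A based Gauss diagram on two circles with `n` arrows and endpoint
distribution `(p, q)`: `p` endpoint positions on the first (based) circle and
`q` on the second, with `p + q = 2n`; `t i` is the tail and `h i` the head of
arrow `i`, all endpoints occur exactly once, and `ε i ∈ {1, -1}`. -/
structure GaussDiagram2 (n p q : ℕ) where
  hpq : p + q = 2 * n
  t : Fin n → Fin p ⊕ Fin q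
  h : Fin n → Fin p ⊕ Fin q
  inj : Function.Injective (Sum.elim t h)
  ε : Fin n → ℤ
  sign : ∀ i, ε i = 1 ∨ ε i = -1

namespace GaussDiagram2

variable {n p q : ℕ}

/-- The bijection between arrow-ends and endpoint positions. -/
noncomputable def ends (G : GaussDiagram2 n p q) : (Fin n ⊕ Fin n) ≃ (Fin p ⊕ Fin q) :=
  Equiv.ofBijective (Sum.elim G.t G.h)
    ((Fintype.bijective_iff_injective_and_card _).mpr ⟨G.inj, by
      have := G.hpq; simp only [Fintype.card_sum, Fintype.card_fin]; omega⟩)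

/-- The involution `μ` exchanging the tail and the head of each arrow. -/
noncomputable def mu (G : GaussDiagram2 n p q) (x : Fin p ⊕ Fin q) : Fin p ⊕ Fin q :=
  G.ends (Sum.swap (G.ends.symm x))

/-- `σ x` is the cyclic successor, within its own circle, of `μ x`. -/
noncomputable def sigma (G : GaussDiagram2 n p q) (x : Fin p ⊕ Fin q) : Fin p ⊕ Fin q :=
  Sum.map cycSucc cycSucc (G.mu x)

/-- `G` is one-component iff both circles carry endpoints and `σ` is a single
cycle of length `p + q`. -/
def OneComponent (G : GaussDiagram2 n p q) : Prop :=
  1 ≤ p ∧ 1 ≤ q ∧ ∀ x y : Fin p ⊕ Fin q, ∃ k : ℕ, (G.sigma)^[k] x = y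

open Classical in
/-- The visit time of a position: the least `k` with `σ^[k] (inl 0) = x`,
iterating from position `0` of the first (based) circle
(junk value `0` if there is none or if `p = 0`). -/
noncomputable def tau (G : GaussDiagram2 n p q) (x : Fin p ⊕ Fin q) : ℕ :=
  if hp : 0 < p then
    (if hx : ∃ k : ℕ, (G.sigma)^[k] (Sum.inl ⟨0, hp⟩) = x then Nat.find hx else 0)
  else 0

/-- `G` is ascending iff for every arrow the tail is visited before the head. -/
def Ascending (G : GaussDiagram2 n p q) : Prop :=
  ∀ i : Fin n, G.tau (G.t i) < G.tau (G.h i)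

lemma t_injective (G : GaussDiagram2 n p q) : Function.Injective G.t := fun i j hij => by
  have := @G.inj (Sum.inl i) (Sum.inl j) hij
  simpa using this

lemma h_injective (G : GaussDiagram2 n p q) : Function.Injective G.h := fun i j hij => by
  have := @G.inj (Sum.inr i) (Sum.inr j) hij
  simpa using this

lemma t_ne_h (G : GaussDiagram2 n p q) (i j : Fin n) : G.t i ≠ G.h j := fun e => by
  have := @G.inj (Sum.inl i) (Sum.inr j) e
  simp at this

/-- The set of endpoint positions of the arrows in `S`. -/
def posSet (G : GaussDiagram2 n p q) (S : Finset (Fin n)) : Finset (Fin p ⊕ Fin q) :=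
  S.image G.t ∪ S.image G.h

lemma posSet_card (G : GaussDiagram2 n p q) (S : Finset (Fin n)) :
    (G.posSet S).card = 2 * S.card := by
  rw [posSet, card_union_of_disjoint, card_image_of_injective _ G.t_injective,
    card_image_of_injective _ G.h_injective, two_mul]
  rw [disjoint_left]
  rintro a ha hb
  simp only [mem_image] at ha hb
  obtain ⟨i, -, rfl⟩ := ha
  obtain ⟨j, -, hj⟩ := hb
  exact G.t_ne_h i j hj.symm

lemma mem_posSet_t (G : GaussDiagram2 n p q) {S : Finset (Fin n)} {i : Fin n} (hi : i ∈ S) :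
    G.t i ∈ G.posSet S := mem_union_left _ (mem_image_of_mem _ hi)

lemma mem_posSet_h (G : GaussDiagram2 n p q) {S : Finset (Fin n)} {i : Fin n} (hi : i ∈ S) :
    G.h i ∈ G.posSet S := mem_union_right _ (mem_image_of_mem _ hi)

/-- Order preserving renumbering of the endpoint positions in `E` on each circle. -/
noncomputable def renum (E : Finset (Fin p ⊕ Fin q)) :
    ∀ x ∈ E, Fin E.toLeft.card ⊕ Fin E.toRight.card
  | Sum.inl a, hx => Sum.inl ((E.toLeft.orderIsoOfFin rfl).symm ⟨a, mem_toLeft.mpr hx⟩)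
  | Sum.inr b, hx => Sum.inr ((E.toRight.orderIsoOfFin rfl).symm ⟨b, mem_toRight.mpr hx⟩)

lemma renum_inj (E : Finset (Fin p ⊕ Fin q)) {x y : Fin p ⊕ Fin q} (hx : x ∈ E) (hy : y ∈ E)
    (hxy : renum E x hx = renum E y hy) : x = y := by
  rcases x with a | a <;> rcases y with b | b <;>
    simp only [renum, Sum.inl.injEq, Sum.inr.injEq, reduceCtorEq] at hxy
  · have := congrArg Subtype.val ((OrderIso.injective _) hxy)
    exact congrArg Sum.inl this
  · have := congrArg Subtype.val ((OrderIso.injective _) hxy)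
    exact congrArg Sum.inr this

/-- The sub-diagram consisting of the arrows of `S` alone, with the endpoint
positions on each circle renumbered preserving their order. -/
noncomputable def sub (G : GaussDiagram2 n p q) (S : Finset (Fin n)) :
    GaussDiagram2 S.card (G.posSet S).toLeft.card (G.posSet S).toRight.card where
  hpq := by rw [card_toLeft_add_card_toRight, G.posSet_card]
  t j := renum (G.posSet S) (G.t (S.orderIsoOfFin rfl j))
    (G.mem_posSet_t (S.orderIsoOfFin rfl j).2)
  h j := renum (G.posSet S) (G.h (S.orderIsoOfFin rfl j))
    (G.mem_posSet_h (S.orderIsoOfFin rfl j).2)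
  ε j := G.ε (S.orderIsoOfFin rfl j)
  sign j := G.sign _
  inj := by
    have hA : Function.Injective (S.orderIsoOfFin rfl) := OrderIso.injective _
    rintro (i | i) (j | j) hij <;> simp only [Sum.elim_inl, Sum.elim_inr] at hij <;>
      have h1 := renum_inj _ _ _ hij
    · have h2 := @G.inj (Sum.inl (S.orderIsoOfFin rfl i))
        (Sum.inl (S.orderIsoOfFin rfl j)) h1
      simp only [Sum.inl.injEq] at h2
      exact congrArg Sum.inl (hA (Subtype.ext h2))
    · have h2 := @G.inj (Sum.inl (S.orderIsoOfFin rfl i))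
        (Sum.inr (S.orderIsoOfFin rfl j)) h1
      simp at h2
    · have h2 := @G.inj (Sum.inr (S.orderIsoOfFin rfl i))
        (Sum.inl (S.orderIsoOfFin rfl j)) h1
      simp at h2
    · have h2 := @G.inj (Sum.inr (S.orderIsoOfFin rfl i))
        (Sum.inr (S.orderIsoOfFin rfl j)) h1
      simp only [Sum.inr.injEq] at h2
      exact congrArg Sum.inr (hA (Subtype.ext h2))

/-- A subset `S` of the arrows is one-component if the sub-diagram on `S` is. -/
def OneComponentSub (G : GaussDiagram2 n p q) (S : Finset (Fin n)) : Prop :=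
  (G.sub S).OneComponent

/-- A subset `S` of the arrows is ascending if the sub-diagram on `S` is. -/
def AscendingSub (G : GaussDiagram2 n p q) (S : Finset (Fin n)) : Prop :=
  (G.sub S).Ascending

open Classical in
/-- `F k G` is the sum over all one-component ascending subsets `S` of the
arrows with `|S| = k` of the product of the signs of the arrows in `S`. -/
noncomputable def F (G : GaussDiagram2 n p q) (k : ℕ) : ℤ :=
  ∑ S : Finset (Fin n),
    if S.card = k ∧ G.OneComponentSub S ∧ G.AscendingSub S then ∏ i ∈ S, G.ε i else 0

end GaussDiagram2

/-- Renumbering of the endpoint positions when smoothing a one-circle diagram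
along an arrow with endpoints `a < b`: positions `0, …, a-1, b+1, …, 2n-1` go,
in this order, to the first (based) circle and positions `a+1, …, b-1`, in this
cyclic order, to the second circle. -/
def smoothPos (a b y : ℕ) : ℕ ⊕ ℕ :=
  if y < a then Sum.inl y
  else if y < b then Sum.inr (y - a - 1)
  else Sum.inl (a + (y - b - 1))


/-!
Split the subsets `S` of arrows of `G₊` according to whether they contain `x`. If `x ∉ S`, the
sub-diagrams of `G₊` and `G₋` on `S` coincide and their terms cancel. The subsets containing `x`
are the sets `{x} ∪ T` for subsets `T` of arrows of `G₀`, and the sub-diagram of `G₀` on `T` is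
the smoothing of that of `G₊` on `{x} ∪ T`, because renumbering endpoints by rank commutes with
smoothing.

Reversing `x` does not change the involution `μ`, hence neither `σ` nor the visit times. So when
`G₊|S` is one-component and its arrows other than `x` are ascending, exactly one of `G₊|S`,
`G₋|S` is ascending, with signs `∏ ε` and `-∏ ε` respectively.

On the smoothing, `σ` is the map induced by `σ` of `G₊|S` on the positions other than the two
endpoints of `x` (an orbit reaching an endpoint steps once more). Hence the smoothing is
one-component iff `G₊|S` is, and visit times keep their order; a smoothing with an empty circle
corresponds to a fixed point of `σ`.
-/

section SkipPair

variable {α β : Type*} [DecidableEq α] {f : α → α} {a b o : α}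

def skipPair (f : α → α) (a b y : α) : α := if f y = a ∨ f y = b then f (f y) else f y

/-- The starting point of a `skipPair` orbit; the base point `o` may itself be deleted. -/
def skipStart (f : α → α) (a b o : α) : α := if o = a ∨ o = b then f o else o

def countAvoid (f : α → α) (a b o : α) (j : ℕ) : ℕ :=
  #{i ∈ range j | f^[i] o ≠ a ∧ f^[i] o ≠ b}

lemma countAvoid_succ (j : ℕ) :
    countAvoid f a b o (j + 1) =
      countAvoid f a b o j + if f^[j] o ≠ a ∧ f^[j] o ≠ b then 1 else 0 := by
  unfold countAvoid
  rw [range_add_one, filter_insert]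
  split
  · rw [card_insert_of_notMem (by simp)]
  · simp

lemma countAvoid_mono : Monotone (countAvoid f a b o) :=
  fun _ _ hrs => card_le_card (filter_subset_filter _ (by simpa using hrs))

lemma skipStart_of_ne (ha : o ≠ a) (hb : o ≠ b) : skipStart f a b o = o := by
  simp [skipStart, ha, hb]

variable (hfa : f a ≠ a ∧ f a ≠ b) (hfb : f b ≠ a ∧ f b ≠ b)
include hfa hfb

omit [DecidableEq α] in
lemma apply_ne_of_eq_or_eq {y : α} (hy : y = a ∨ y = b) : f y ≠ a ∧ f y ≠ b := by
  rcases hy with rfl | rfl <;> assumption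

variable {g : β → β} {ψ : α → β}
  (hstep : ∀ y, y ≠ a → y ≠ b → g (ψ y) = ψ (skipPair f a b y))
include hstep

lemma iterate_countAvoid_eq_map : ∀ j, f^[j] o ≠ a → f^[j] o ≠ b →
    g^[countAvoid f a b o j] (ψ (skipStart f a b o)) = ψ (f^[j] o) := by
  intro j
  induction j using Nat.strong_induction_on with
  | _ j ih =>
    match j with
    | 0 =>
      intro h1 h2
      simp only [Function.iterate_zero_apply] at h1 h2
      simp [countAvoid, skipStart_of_ne h1 h2]
    | j + 1 =>
      intro h1 h2
      have hnext : ∀ {r}, f^[r + 1] o = f (f^[r] o) := Function.iterate_succ_apply' _ _ _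
      by_cases hj : f^[j] o = a ∨ f^[j] o = b
      · rw [countAvoid_succ, if_neg (by tauto), Nat.add_zero]
        match j, hj with
        | 0, hj => simp [countAvoid, skipStart, show o = a ∨ o = b by simpa using hj]
        | j + 1, hj =>
          have hw : f^[j] o ≠ a ∧ f^[j] o ≠ b := by
            by_contra hc
            have := apply_ne_of_eq_or_eq hfa hfb (by tauto : f^[j] o = a ∨ f^[j] o = b)
            rw [← hnext] at this
            tauto
          rw [countAvoid_succ, if_pos hw, Function.iterate_succ_apply' g,
            ih j (by omega) hw.1 hw.2, hstep _ hw.1 hw.2, skipPair, ← hnext,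
            if_pos hj, ← hnext]
      · push Not at hj
        rw [countAvoid_succ, if_pos hj, Function.iterate_succ_apply' g,
          ih j (by omega) hj.1 hj.2, hstep _ hj.1 hj.2, skipPair, ← hnext,
          if_neg (by push Not; exact ⟨h1, h2⟩)]

lemma exists_iterate_eq_map_iterate : ∀ i : ℕ, ∃ r, g^[i] (ψ (skipStart f a b o)) = ψ (f^[r] o) ∧
    f^[r] o ≠ a ∧ f^[r] o ≠ b ∧ countAvoid f a b o r = i := by
  have hnext : ∀ {r}, f^[r + 1] o = f (f^[r] o) := Function.iterate_succ_apply' _ _ _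
  intro i
  induction i with
  | zero =>
    by_cases ho : o = a ∨ o = b
    · have hne := apply_ne_of_eq_or_eq hfa hfb ho
      refine ⟨1, by simp [skipStart, ho], hne.1, hne.2, ?_⟩
      rw [countAvoid_succ, if_neg (by simp only [Function.iterate_zero_apply]; tauto)]
      simp [countAvoid]
    · push Not at ho
      exact ⟨0, by simp [skipStart_of_ne ho.1 ho.2], ho.1, ho.2, by simp [countAvoid]⟩
  | succ i ih =>
    obtain ⟨r, h1, h2, h3, h4⟩ := ih
    rw [Function.iterate_succ_apply' g, h1, hstep _ h2 h3, skipPair, ← hnext]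
    by_cases hfr : f^[r + 1] o = a ∨ f^[r + 1] o = b
    · have hne := apply_ne_of_eq_or_eq hfa hfb hfr
      rw [← hnext] at hne
      refine ⟨r + 2, by rw [if_pos hfr, ← hnext], hne.1, hne.2, ?_⟩
      rw [countAvoid_succ, if_neg (by tauto), countAvoid_succ, if_pos ⟨h2, h3⟩, h4]
    · push Not at hfr
      refine ⟨r + 1, by rw [if_neg (by push Not; exact hfr)], hfr.1, hfr.2, ?_⟩
      rw [countAvoid_succ, if_pos ⟨h2, h3⟩, h4]

variable (hinj : ∀ y z, y ≠ a → y ≠ b → z ≠ a → z ≠ b → ψ y = ψ z → y = z)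
include hinj

lemma find_iterate_eq_countAvoid {y : α} (hy1 : y ≠ a) (hy2 : y ≠ b)
    [DecidablePred fun i => g^[i] (ψ (skipStart f a b o)) = ψ y]
    [DecidablePred fun n => f^[n] o = y]
    (hgy : ∃ i, g^[i] (ψ (skipStart f a b o)) = ψ y) (hfy : ∃ n, f^[n] o = y) :
    Nat.find hgy = countAvoid f a b o (Nat.find hfy) := by
  have hspec := Nat.find_spec hfy
  apply le_antisymm
  · apply Nat.find_min' hgy
    rw [iterate_countAvoid_eq_map hfa hfb hstep _ (by rwa [hspec]) (by rwa [hspec]), hspec]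
  · obtain ⟨r, h1, h2, h3, h4⟩ :=
      exists_iterate_eq_map_iterate (o := o) hfa hfb hstep (Nat.find hgy)
    rw [Nat.find_spec hgy] at h1
    rw [← h4]
    exact countAvoid_mono (Nat.find_min' hfy (hinj _ _ h2 h3 hy1 hy2 h1.symm))

lemma find_lt_find_iff_of_skipPair {y z : α} (hy1 : y ≠ a) (hy2 : y ≠ b) (hz1 : z ≠ a)
    (hz2 : z ≠ b)
    [DecidablePred fun i => g^[i] (ψ (skipStart f a b o)) = ψ y]
    [DecidablePred fun n => f^[n] o = y]
    [DecidablePred fun i => g^[i] (ψ (skipStart f a b o)) = ψ z]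
    [DecidablePred fun n => f^[n] o = z]
    (hgy : ∃ i, g^[i] (ψ (skipStart f a b o)) = ψ y) (hfy : ∃ n, f^[n] o = y)
    (hgz : ∃ i, g^[i] (ψ (skipStart f a b o)) = ψ z) (hfz : ∃ n, f^[n] o = z) :
    Nat.find hgy < Nat.find hgz ↔ Nat.find hfy < Nat.find hfz := by
  rw [find_iterate_eq_countAvoid hfa hfb hstep hinj hy1 hy2 hgy hfy,
    find_iterate_eq_countAvoid hfa hfb hstep hinj hz1 hz2 hgz hfz]
  constructor
  · intro h
    by_contra! hc
    exact (countAvoid_mono hc).not_gt h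
  · intro h
    have h1 := countAvoid_succ (f := f) (a := a) (b := b) (o := o) (Nat.find hfy)
    rw [if_pos ⟨by rwa [Nat.find_spec hfy], by rwa [Nat.find_spec hfy]⟩] at h1
    have h2 := countAvoid_mono (f := f) (a := a) (b := b) (o := o)
      (show Nat.find hfy + 1 ≤ Nat.find hfz from h)
    omega

variable (hsurj : ∀ u : β, ∃ y, y ≠ a ∧ y ≠ b ∧ ψ y = u)
include hsurj

lemma transitive_iff_of_skipPair (hf : Function.Surjective f) :
    (∀ x y : α, ∃ n, f^[n] x = y) ↔ ∀ u v : β, ∃ i, g^[i] u = v := by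
  constructor
  · intro hoc u v
    obtain ⟨y, hy1, hy2, rfl⟩ := hsurj u
    obtain ⟨z, hz1, hz2, rfl⟩ := hsurj v
    obtain ⟨n, rfl⟩ := hoc y z
    have := iterate_countAvoid_eq_map (o := y) hfa hfb hstep n hz1 hz2
    exact ⟨_, by rwa [skipStart_of_ne hy1 hy2] at this⟩
  · intro hoc
    have core : ∀ x y : α, x ≠ a → x ≠ b → y ≠ a → y ≠ b → ∃ n, f^[n] x = y := by
      intro x y hx1 hx2 hy1 hy2
      obtain ⟨i, hi⟩ := hoc (ψ x) (ψ y)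
      obtain ⟨r, h1, h2, h3, -⟩ := exists_iterate_eq_map_iterate (o := x) hfa hfb hstep i
      rw [skipStart_of_ne hx1 hx2, hi] at h1
      exact ⟨r, hinj _ _ h2 h3 hy1 hy2 h1.symm⟩
    intro x y
    obtain ⟨c, hc1, hc2⟩ : ∃ c, f^[c] x ≠ a ∧ f^[c] x ≠ b := by
      by_cases hx : x = a ∨ x = b
      · exact ⟨1, apply_ne_of_eq_or_eq hfa hfb hx⟩
      · push Not at hx
        exact ⟨0, hx⟩
    obtain ⟨d, y', hy'1, hy'2, rfl⟩ : ∃ d y', y' ≠ a ∧ y' ≠ b ∧ f^[d] y' = y := by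
      by_cases hy : y = a ∨ y = b
      · obtain ⟨y', rfl⟩ := hf y
        refine ⟨1, y', fun h => ?_, fun h => ?_, rfl⟩ <;> rw [h] at hy <;> tauto
      · push Not at hy
        exact ⟨0, y, hy.1, hy.2, rfl⟩
    obtain ⟨n, hn⟩ := core _ _ hc1 hc2 hy'1 hy'2
    exact ⟨d + n + c, by rw [Function.iterate_add_apply, Function.iterate_add_apply, hn]⟩

end SkipPair

section Rank

variable {α γ : Type*} [LinearOrder α] [LinearOrder γ] {s : Finset α} {v w : α}

def rankIn (s : Finset α) (v : α) : ℕ := #{w ∈ s | w < v}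

lemma coe_orderIsoOfFin_symm (s : Finset α) {k : ℕ} (h : #s = k) (x : s) :
    (((s.orderIsoOfFin h).symm x : Fin k) : ℕ) = rankIn s x := by
  set e := s.orderIsoOfFin h
  rw [← Fin.card_Iio]
  refine card_bij' (fun j _ => (e j : α)) (fun w hw => e.symm ⟨w, (mem_filter.1 hw).1⟩)
    ?_ ?_ ?_ ?_
  · intro j hj
    refine mem_filter.2 ⟨(e j).2, ?_⟩
    have := e.lt_iff_lt.2 (mem_Iio.1 hj)
    rwa [e.apply_symm_apply] at this
  · intro w hw
    rw [mem_Iio, ← e.lt_iff_lt, e.apply_symm_apply, e.apply_symm_apply]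
    exact (mem_filter.1 hw).2
  · simp
  · simp

lemma orderIsoOfFin_coe_eq_iff {α : Type*} [LinearOrder α] {S : Finset α} {x : α} (hx : x ∈ S)
    (j : Fin #S) :
    ((S.orderIsoOfFin rfl j : S) : α) = x ↔ j = (S.orderIsoOfFin rfl).symm ⟨x, hx⟩ := by
  rw [OrderIso.eq_symm_apply, Subtype.ext_iff]

lemma rankIn_image {φ : α → γ} (hφ : StrictMonoOn φ s) (hw : w ∈ s) :
    rankIn (s.image φ) (φ w) = rankIn s w := by
  have : {u ∈ s.image φ | u < φ w} = {u ∈ s | u < w}.image φ := by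
    ext u
    simp only [mem_filter, mem_image]
    constructor
    · rintro ⟨⟨u, hu, rfl⟩, huw⟩
      exact ⟨u, ⟨hu, (hφ.lt_iff_lt hu hw).mp huw⟩, rfl⟩
    · rintro ⟨u, ⟨hu, huw⟩, rfl⟩
      exact ⟨⟨u, hu, rfl⟩, (hφ.lt_iff_lt hu hw).mpr huw⟩
  rw [rankIn, this, card_image_of_injOn (hφ.injOn.mono (filter_subset _ _)), rankIn]

lemma rankIn_mono : Monotone (rankIn s) :=
  fun _ _ h => card_le_card (monotone_filter_right s fun _ _ hu => lt_of_lt_of_le hu h)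

lemma rankIn_lt_rankIn (hv : v ∈ s) (h : v < w) : rankIn s v < rankIn s w := by
  refine card_lt_card ⟨monotone_filter_right s fun _ _ hu => hu.trans h, fun hsub => ?_⟩
  simpa using hsub (mem_filter.2 ⟨hv, h⟩)

end Rank

section SmoothPos

variable {P : Finset ℕ} {a b w : ℕ}

def smoothSet (P : Finset ℕ) (a b : ℕ) : Finset (ℕ ⊕ ℕ) :=
  ((P.erase a).erase b).image (smoothPos a b)

lemma smoothPos_eq_inl_iff {u : ℕ} :
    smoothPos a b w = Sum.inl u ↔ (w < a ∨ b ≤ w) ∧ (if w < a then w else a + (w - b - 1)) = u := by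
  unfold smoothPos
  split_ifs <;> simp <;> omega

lemma smoothPos_eq_inr_iff {u : ℕ} :
    smoothPos a b w = Sum.inr u ↔ a ≤ w ∧ w < b ∧ w - a - 1 = u := by
  unfold smoothPos
  split_ifs <;> simp <;> omega

lemma toLeft_smoothSet (hab : a < b) :
    (smoothSet P a b).toLeft =
      {v ∈ P | v < a ∨ b < v}.image fun v => if v < a then v else a + (v - b - 1) := by
  ext u
  simp only [smoothSet, mem_toLeft, mem_image, mem_filter, mem_erase, smoothPos_eq_inl_iff]
  constructor
  · rintro ⟨v, ⟨hvb, hva, hv⟩, hreg, rfl⟩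
    exact ⟨v, ⟨hv, by omega⟩, rfl⟩
  · rintro ⟨v, ⟨hv, hreg⟩, rfl⟩
    exact ⟨v, ⟨by omega, by omega, hv⟩, by omega, rfl⟩

lemma toRight_smoothSet :
    (smoothSet P a b).toRight = {v ∈ P | a < v ∧ v < b}.image fun v => v - a - 1 := by
  ext u
  simp only [smoothSet, mem_toRight, mem_image, mem_filter, mem_erase, smoothPos_eq_inr_iff]
  constructor
  · rintro ⟨v, ⟨hvb, hva, hv⟩, hreg, hvb', rfl⟩
    exact ⟨v, ⟨hv, by omega, hvb'⟩, rfl⟩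
  · rintro ⟨v, ⟨hv, hreg⟩, rfl⟩
    exact ⟨v, ⟨by omega, by omega, hv⟩, by omega, hreg.2, rfl⟩

lemma strictMonoOn_smoothLeft :
    StrictMonoOn (fun v => if v < a then v else a + (v - b - 1))
      ((P.filter fun v => v < a ∨ b < v : Finset ℕ) : Set ℕ) := by
  intro v hv u hu h
  simp only [coe_filter, Set.mem_ofPred_eq] at hv hu
  dsimp only
  split_ifs <;> omega

lemma strictMonoOn_smoothRight :
    StrictMonoOn (fun v => v - a - 1) ((P.filter fun v => a < v ∧ v < b : Finset ℕ) : Set ℕ) := by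
  intro v hv u hu h
  simp only [coe_filter, Set.mem_ofPred_eq] at hv hu
  dsimp only
  omega

lemma rankIn_eq_of_lt (ha : a ∈ P) (haw : a < w) :
    rankIn P w = rankIn P a + 1 + #{v ∈ P | a < v ∧ v < w} := by
  have h1 : (∑ v ∈ P, if v = a then 1 else 0) = 1 := by simp [ha]
  have h2 : (∑ v ∈ P, if v < w then 1 else 0) = ∑ v ∈ P, ((if v < a then 1 else 0) +
      (if v = a then 1 else 0) + if a < v ∧ v < w then 1 else 0) :=
    sum_congr rfl fun v _ => by split_ifs <;> omega
  rw [sum_add_distrib, sum_add_distrib, h1] at h2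
  simpa only [rankIn, card_filter] using h2

lemma card_eq_rankIn_add (ha : a ∈ P) : #P = rankIn P a + 1 + #{v ∈ P | a < v} := by
  have h1 : (∑ v ∈ P, if v = a then 1 else 0) = 1 := by simp [ha]
  have h2 : (∑ v ∈ P, 1) = ∑ v ∈ P, ((if v < a then 1 else 0) +
      (if v = a then 1 else 0) + if a < v then 1 else 0) :=
    sum_congr rfl fun v _ => by split_ifs <;> omega
  rw [sum_add_distrib, sum_add_distrib, h1] at h2
  rw [card_eq_sum_ones]
  simpa only [rankIn, card_filter] using h2

variable (ha : a ∈ P) (hb : b ∈ P) (hab : a < b)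
include ha hb hab

lemma card_toLeft_smoothSet :
    #(smoothSet P a b).toLeft = rankIn P a + (#P - 1 - rankIn P b) := by
  rw [toLeft_smoothSet hab, card_image_of_injOn (strictMonoOn_smoothLeft).injOn,
    card_eq_rankIn_add hb, rankIn_eq_of_lt ha hab]
  have : #{v ∈ P | v < a ∨ b < v} = rankIn P a + #{v ∈ P | b < v} := by
    simp only [rankIn, card_filter, ← sum_add_distrib]
    exact sum_congr rfl fun v _ => by split_ifs <;> omega
  omega

omit hb in
lemma card_toRight_smoothSet : #(smoothSet P a b).toRight = rankIn P b - rankIn P a - 1 := by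
  rw [toRight_smoothSet, card_image_of_injOn strictMonoOn_smoothRight.injOn,
    rankIn_eq_of_lt ha hab]
  omega

lemma smoothPos_rankIn (hw : w ∈ P) (hwa : w ≠ a) (hwb : w ≠ b) :
    smoothPos (rankIn P a) (rankIn P b) (rankIn P w) =
      Sum.map (rankIn (smoothSet P a b).toLeft) (rankIn (smoothSet P a b).toRight)
        (smoothPos a b w) := by
  have hPa := rankIn_lt_rankIn ha hab
  rcases lt_or_gt_of_ne hwa with hwa | hwa
  · have hL := rankIn_image (strictMonoOn_smoothLeft (a := a) (b := b))
      (mem_filter.2 ⟨hw, Or.inl hwa⟩)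
    have hP : rankIn {v ∈ P | v < a ∨ b < v} w = rankIn P w := by
      rw [rankIn, rankIn, filter_filter]
      exact congrArg card (filter_congr fun v _ => by omega)
    rw [← toLeft_smoothSet hab, hP, if_pos hwa] at hL
    have hwr := rankIn_lt_rankIn hw hwa
    simp only [smoothPos, if_pos hwa, if_pos hwr, Sum.map_inl, hL]
  rcases lt_or_gt_of_ne hwb with hwb | hwb
  · have hR := rankIn_image (strictMonoOn_smoothRight (P := P)) (mem_filter.2 ⟨hw, hwa, hwb⟩)
    have hP : rankIn {v ∈ P | a < v ∧ v < b} w = #{v ∈ P | a < v ∧ v < w} := by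
      rw [rankIn, filter_filter]
      exact congrArg card (filter_congr fun v _ => by omega)
    rw [← toRight_smoothSet, hP] at hR
    have h1 := rankIn_eq_of_lt ha hwa
    have h2 := rankIn_lt_rankIn hw hwb
    simp only [smoothPos, if_neg (show ¬w < a by omega), if_pos hwb,
      if_neg (show ¬rankIn P w < rankIn P a by omega), if_pos h2, Sum.map_inr, hR, Sum.inr.injEq]
    omega
  · have hL := rankIn_image (strictMonoOn_smoothLeft (a := a) (b := b))
      (mem_filter.2 ⟨hw, Or.inr hwb⟩)
    have hP : rankIn {v ∈ P | v < a ∨ b < v} w = rankIn P a + #{v ∈ P | b < v ∧ v < w} := by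
      simp only [rankIn, filter_filter, card_filter, ← sum_add_distrib]
      exact sum_congr rfl fun v _ => by split_ifs <;> omega
    rw [← toLeft_smoothSet hab, hP, if_neg (show ¬w < a by omega)] at hL
    have h1 := rankIn_eq_of_lt hb hwb
    simp only [smoothPos, if_neg (show ¬w < a by omega), if_neg (show ¬w < b by omega),
      if_neg (show ¬rankIn P w < rankIn P a by omega),
      if_neg (show ¬rankIn P w < rankIn P b by omega), Sum.map_inl, hL, Sum.inl.injEq]
    omega

end SmoothPos

lemma succ_mod_of_lt {v N : ℕ} (hv : v < N) :
    (v + 1) % N = if v + 1 = N then 0 else v + 1 := by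
  split_ifs with h
  · simp [h]
  · exact Nat.mod_eq_of_lt (by omega)

lemma cycSucc_val {N : ℕ} (z : Fin N) :
    ((cycSucc z : Fin N) : ℕ) = if (z : ℕ) + 1 = N then 0 else (z : ℕ) + 1 :=
  succ_mod_of_lt z.2

lemma sumMap_val_injective {p q : ℕ} :
    Function.Injective (Sum.map (Fin.val (n := p)) (Fin.val (n := q))) :=
  Sum.map_injective.2 ⟨Fin.val_injective, Fin.val_injective⟩

lemma Finset.toLeft_image_sumMap {α β γ δ : Type*} [DecidableEq γ] [DecidableEq δ]
    (u : Finset (α ⊕ β)) (f : α → γ) (g : β → δ) :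
    (u.image (Sum.map f g)).toLeft = u.toLeft.image f := by
  ext c
  simp [Sum.exists]

lemma Finset.toRight_image_sumMap {α β γ δ : Type*} [DecidableEq γ] [DecidableEq δ]
    (u : Finset (α ⊕ β)) (f : α → γ) (g : β → δ) :
    (u.image (Sum.map f g)).toRight = u.toRight.image g := by
  ext c
  simp [Sum.exists]

section SmoothPosFin

variable {N p q : ℕ} (hp : 1 ≤ p) (hq : 1 ≤ q) (a b : ℕ)

/-- `smoothPos` on positions. The clamping by `min` only matters at `a` and `b`, where the value
is junk. -/
def smoothPosFin (z : Fin N) : Fin p ⊕ Fin q :=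
  if (z : ℕ) < a then Sum.inl ⟨min (z : ℕ) (p - 1), by omega⟩
  else if (z : ℕ) < b then Sum.inr ⟨min ((z : ℕ) - a - 1) (q - 1), by omega⟩
  else Sum.inl ⟨min (a + ((z : ℕ) - b - 1)) (p - 1), by omega⟩

variable {a b} (hpe : p = a + (N - 1 - b)) (hqe : q = b - a - 1) (hab : a < b) (hbN : b < N)
include hpe hqe hab hbN

lemma sumMap_val_smoothPosFin {z : Fin N} (h1 : (z : ℕ) ≠ a) (h2 : (z : ℕ) ≠ b) :
    Sum.map Fin.val Fin.val (smoothPosFin hp hq a b z) = smoothPos a b z := by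
  have hz := z.2
  unfold smoothPosFin smoothPos
  split_ifs <;> simp only [Sum.map_inl, Sum.map_inr, Sum.inl.injEq, Sum.inr.injEq] <;> omega

lemma smoothPosFin_injOn {z w : Fin N} (hz1 : (z : ℕ) ≠ a) (hz2 : (z : ℕ) ≠ b)
    (hw1 : (w : ℕ) ≠ a) (hw2 : (w : ℕ) ≠ b)
    (h : smoothPosFin hp hq a b z = smoothPosFin hp hq a b w) : z = w := by
  have h2 := congrArg (Sum.map Fin.val Fin.val) h
  rw [sumMap_val_smoothPosFin hp hq hpe hqe hab hbN hz1 hz2,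
    sumMap_val_smoothPosFin hp hq hpe hqe hab hbN hw1 hw2] at h2
  have hz := z.2
  have hw := w.2
  unfold smoothPos at h2
  apply Fin.ext
  split_ifs at h2 <;> simp only [Sum.inl.injEq, Sum.inr.injEq] at h2 <;> omega

lemma exists_smoothPosFin_eq (u : Fin p ⊕ Fin q) :
    ∃ z : Fin N, (z : ℕ) ≠ a ∧ (z : ℕ) ≠ b ∧ smoothPosFin hp hq a b z = u := by
  have key : ∀ z : Fin N, (z : ℕ) ≠ a → (z : ℕ) ≠ b →
      smoothPos a b z = Sum.map Fin.val Fin.val u → smoothPosFin hp hq a b z = u :=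
    fun z h1 h2 h => sumMap_val_injective
      (by rw [sumMap_val_smoothPosFin hp hq hpe hqe hab hbN h1 h2, h])
  rcases u with v | v <;> have hv := v.2
  · by_cases hva : (v : ℕ) < a
    · exact ⟨⟨v, by omega⟩, by simp; omega, by simp; omega,
        key _ (by simp; omega) (by simp; omega) (by simp [smoothPos, hva])⟩
    · refine ⟨⟨b + 1 + ((v : ℕ) - a), by omega⟩, by simp; omega, by simp; omega,
        key _ (by simp; omega) (by simp; omega) ?_⟩
      simp only [smoothPos, Sum.map_inl]
      rw [if_neg (by omega), if_neg (by omega), Sum.inl.injEq]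
      omega
  · refine ⟨⟨a + 1 + (v : ℕ), by omega⟩, by simp; omega, by simp; omega,
      key _ (by simp; omega) (by simp; omega) ?_⟩
    simp only [smoothPos, Sum.map_inr]
    rw [if_neg (by omega), if_pos (by omega), Sum.inr.injEq]
    omega

/-- On the circles of the smoothing, the successor of a position is its successor on the
original circle, except that `a` is followed by `b + 1` and `b` by `a + 1`. -/
lemma cycSucc_smoothPosFin (z w : Fin N) (hz1 : (z : ℕ) ≠ a) (hz2 : (z : ℕ) ≠ b)
    (hw : (w : ℕ) = if ((z : ℕ) + 1) % N = a then (b + 1) % N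
      else if ((z : ℕ) + 1) % N = b then (a + 1) % N else ((z : ℕ) + 1) % N) :
    Sum.map cycSucc cycSucc (smoothPosFin hp hq a b z) = smoothPosFin hp hq a b w := by
  have hz := z.2
  have hwlt := w.2
  rw [succ_mod_of_lt hz, succ_mod_of_lt hbN, succ_mod_of_lt (hab.trans hbN)] at hw
  have hw1 : (w : ℕ) ≠ a := by split_ifs at hw <;> omega
  have hw2 : (w : ℕ) ≠ b := by split_ifs at hw <;> omega
  apply sumMap_val_injective
  rw [sumMap_val_smoothPosFin hp hq hpe hqe hab hbN hw1 hw2]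
  have hspec := sumMap_val_smoothPosFin hp hq hpe hqe hab hbN hz1 hz2
  rcases hpz : smoothPosFin hp hq a b z with v | v <;> rw [hpz] at hspec <;> have hv := v.2
  · rw [Sum.map_inl, eq_comm, smoothPos_eq_inl_iff] at hspec
    rw [Sum.map_inl, Sum.map_inl, cycSucc_val, eq_comm, smoothPos_eq_inl_iff]
    split_ifs at hspec hw ⊢ <;> omega
  · rw [Sum.map_inr, eq_comm, smoothPos_eq_inr_iff] at hspec
    rw [Sum.map_inr, Sum.map_inr, cycSucc_val, eq_comm, smoothPos_eq_inr_iff]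
    split_ifs at hspec hw ⊢ <;> omega

end SmoothPosFin

namespace GaussDiagram

variable {n : ℕ} (G : GaussDiagram n)

protected lemma ext {G G' : GaussDiagram n} (ht : G.t = G'.t) (hh : G.h = G'.h)
    (hε : G.ε = G'.ε) : G = G' := by
  cases G
  cases G'
  simp only at ht hh hε
  subst ht hh hε
  rfl

lemma mu_t (i : Fin n) : G.mu (G.t i) = G.h i := by
  simp only [mu]
  rw [show G.t i = G.ends (Sum.inl i) from rfl, Equiv.symm_apply_apply]
  rfl

lemma mu_h (i : Fin n) : G.mu (G.h i) = G.t i := by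
  simp only [mu]
  rw [show G.h i = G.ends (Sum.inr i) from rfl, Equiv.symm_apply_apply]
  rfl

lemma mu_involutive : Function.Involutive G.mu := fun y => by
  simp only [mu, Equiv.symm_apply_apply, Sum.swap_swap, Equiv.apply_symm_apply]

lemma sigma_eq_cycSucc_mu (y : Fin (2 * n)) : G.sigma y = cycSucc (G.mu y) := rfl

lemma sigma_bijective : Function.Bijective G.sigma := by
  refine Finite.injective_iff_bijective.mp fun y z h => G.mu_involutive.injective ?_
  have h' := congrArg Fin.val h
  simp only [sigma_eq_cycSucc_mu, cycSucc_val] at h'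
  apply Fin.ext
  split_ifs at h' <;> omega

lemma exists_t_or_h (y : Fin (2 * n)) : ∃ i, G.t i = y ∨ G.h i = y := by
  obtain ⟨i | i, hi⟩ := G.ends.surjective y
  exacts [⟨i, Or.inl hi⟩, ⟨i, Or.inr hi⟩]

lemma mem_posSet_iff {S : Finset (Fin n)} {w : Fin (2 * n)} :
    w ∈ G.posSet S ↔ ∃ i ∈ S, G.t i = w ∨ G.h i = w := by
  simp only [posSet, mem_union, mem_image]
  aesop

open Classical in
lemma tau_eq_find {y : Fin (2 * n)} (hy : ∃ k, G.sigma^[k] ⟨0, y.pos⟩ = y) :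
    G.tau y = Nat.find hy := by
  rw [tau, dif_pos hy]

lemma tau_injective (hoc : G.OneComponent) : Function.Injective G.tau := by
  classical
  intro y z h
  rw [G.tau_eq_find (hoc _ y), G.tau_eq_find (hoc _ z)] at h
  have hy := Nat.find_spec (hoc ⟨0, y.pos⟩ y)
  rw [h] at hy
  exact hy.symm.trans (Nat.find_spec (hoc _ z))

lemma tau_congr {G' : GaussDiagram n} (h : G'.sigma = G.sigma) : G'.tau = G.tau := by
  funext y
  unfold tau
  by_cases hy : ∃ k, G.sigma^[k] ⟨0, y.pos⟩ = y
  · rw [dif_pos (h ▸ hy), dif_pos hy]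
    exact Nat.find_congr' (by rw [h])
  · rw [dif_neg (h ▸ hy), dif_neg hy]

lemma not_oneComponent_of_sigma_eq_self (hn : 1 ≤ n)
    {y : Fin (2 * n)} (hy : G.sigma y = y) : ¬G.OneComponent := by
  intro hoc
  obtain ⟨z, hz⟩ := Fintype.exists_ne_of_one_lt_card (by simp; omega) y
  obtain ⟨k, hk⟩ := hoc y z
  rw [Function.iterate_fixed hy] at hk
  exact hz hk.symm

lemma ascending_iff (x : Fin n) :
    G.Ascending ↔ (∀ i ≠ x, G.tau (G.t i) < G.tau (G.h i)) ∧ G.tau (G.t x) < G.tau (G.h x) := by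
  refine ⟨fun h => ⟨fun i _ => h i, h x⟩, fun ⟨h, hx⟩ i => ?_⟩
  by_cases hi : i = x
  · exact hi ▸ hx
  · exact h i hi

lemma sub_t_val (S : Finset (Fin n)) (j : Fin #S) :
    ((G.sub S).t j : ℕ) = rankIn ((G.posSet S).image Fin.val) (G.t (S.orderIsoOfFin rfl j)) := by
  rw [rankIn_image (Fin.val_strictMono.strictMonoOn _) (G.mem_posSet_t (S.orderIsoOfFin rfl j).2)]
  exact coe_orderIsoOfFin_symm _ _ _

lemma sub_h_val (S : Finset (Fin n)) (j : Fin #S) :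
    ((G.sub S).h j : ℕ) = rankIn ((G.posSet S).image Fin.val) (G.h (S.orderIsoOfFin rfl j)) := by
  rw [rankIn_image (Fin.val_strictMono.strictMonoOn _) (G.mem_posSet_h (S.orderIsoOfFin rfl j).2)]
  exact coe_orderIsoOfFin_symm _ _ _

section Reverse

variable {G} {G' : GaussDiagram n} {x : Fin n}
  (ht : G'.t = Function.update G.t x (G.h x)) (hh : G'.h = Function.update G.h x (G.t x))
include ht hh

lemma mu_eq_of_reverse : G'.mu = G.mu := by
  funext y
  obtain ⟨i, rfl | rfl⟩ := G.exists_t_or_h y <;> by_cases hix : i = x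
  · subst hix
    have : G'.h i = G.t i := by rw [hh, Function.update_self]
    rw [← this, G'.mu_h, ht, Function.update_self, this, G.mu_t]
  · have : G'.t i = G.t i := by rw [ht, Function.update_of_ne hix]
    rw [← this, G'.mu_t, hh, Function.update_of_ne hix, this, G.mu_t]
  · subst hix
    have : G'.t i = G.h i := by rw [ht, Function.update_self]
    rw [← this, G'.mu_t, hh, Function.update_self, this, G.mu_h]
  · have : G'.h i = G.h i := by rw [hh, Function.update_of_ne hix]
    rw [← this, G'.mu_h, ht, Function.update_of_ne hix, this, G.mu_h]

lemma sigma_eq_of_reverse : G'.sigma = G.sigma := by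
  funext y
  rw [sigma_eq_cycSucc_mu, sigma_eq_cycSucc_mu, mu_eq_of_reverse ht hh]

lemma oneComponent_iff_of_reverse : G'.OneComponent ↔ G.OneComponent := by
  simp only [OneComponent, sigma_eq_of_reverse ht hh]

lemma tau_eq_of_reverse : G'.tau = G.tau :=
  G.tau_congr (sigma_eq_of_reverse ht hh)

lemma ascending_iff_of_reverse :
    G'.Ascending ↔ (∀ i ≠ x, G.tau (G.t i) < G.tau (G.h i)) ∧ G.tau (G.h x) < G.tau (G.t x) := by
  rw [G'.ascending_iff x, tau_eq_of_reverse ht hh, ht, hh]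
  simp +contextual [Function.update_of_ne]

lemma ascending_xor_ascending_of_reverse (hoc : G.OneComponent) :
    (G.Ascending ∨ G'.Ascending ↔ ∀ i ≠ x, G.tau (G.t i) < G.tau (G.h i)) ∧
      ¬(G.Ascending ∧ G'.Ascending) := by
  rw [G.ascending_iff x, ascending_iff_of_reverse ht hh]
  have hne : G.tau (G.t x) ≠ G.tau (G.h x) := fun h => G.t_ne_h x x (G.tau_injective hoc h)
  refine ⟨⟨fun h => h.elim And.left And.left, fun h => ?_⟩, fun ⟨⟨_, h₁⟩, _, h₂⟩ => h₁.asymm h₂⟩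
  rcases hne.lt_or_gt with hlt | hlt
  exacts [Or.inl ⟨h, hlt⟩, Or.inr ⟨h, hlt⟩]

lemma posSet_eq_of_reverse (S : Finset (Fin n)) : G'.posSet S = G.posSet S := by
  ext w
  simp only [mem_posSet_iff, ht, hh, Function.update_apply]
  refine exists_congr fun i => and_congr_right fun _ => ?_
  split_ifs with hi
  · subst hi
    exact or_comm
  · rfl

lemma sub_t_of_reverse (S : Finset (Fin n)) (j : Fin #S) :
    (G'.sub S).t j =
      if (S.orderIsoOfFin rfl j : Fin n) = x then (G.sub S).h j else (G.sub S).t j := by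
  split_ifs with hj <;> apply Fin.ext
  · rw [sub_t_val, sub_h_val, posSet_eq_of_reverse ht hh, ht, hj, Function.update_self]
  · rw [sub_t_val, sub_t_val, posSet_eq_of_reverse ht hh, ht, Function.update_of_ne hj]

lemma sub_h_of_reverse (S : Finset (Fin n)) (j : Fin #S) :
    (G'.sub S).h j =
      if (S.orderIsoOfFin rfl j : Fin n) = x then (G.sub S).t j else (G.sub S).h j := by
  split_ifs with hj <;> apply Fin.ext
  · rw [sub_h_val, sub_t_val, posSet_eq_of_reverse ht hh, hh, hj, Function.update_self]
  · rw [sub_h_val, sub_h_val, posSet_eq_of_reverse ht hh, hh, Function.update_of_ne hj]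

lemma sub_reverse_of_mem {S : Finset (Fin n)} (hx : x ∈ S) :
    (G'.sub S).t = Function.update (G.sub S).t ((S.orderIsoOfFin rfl).symm ⟨x, hx⟩)
        ((G.sub S).h ((S.orderIsoOfFin rfl).symm ⟨x, hx⟩)) ∧
      (G'.sub S).h = Function.update (G.sub S).h ((S.orderIsoOfFin rfl).symm ⟨x, hx⟩)
        ((G.sub S).t ((S.orderIsoOfFin rfl).symm ⟨x, hx⟩)) := by
  constructor <;> funext j <;>
    simp only [sub_t_of_reverse ht hh, sub_h_of_reverse ht hh, orderIsoOfFin_coe_eq_iff hx,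
      Function.update_apply] <;>
    split_ifs with hj <;> simp only [hj]

lemma sub_eq_of_reverse_of_notMem {S : Finset (Fin n)} (hx : x ∉ S)
    (hε : ∀ i ∈ S, G'.ε i = G.ε i) : G'.sub S = G.sub S := by
  have hne : ∀ j : Fin #S, (S.orderIsoOfFin rfl j : Fin n) ≠ x :=
    fun j hj => hx (hj ▸ (S.orderIsoOfFin rfl j).2)
  refine GaussDiagram.ext (funext fun j => ?_) (funext fun j => ?_) (funext fun j => ?_)
  · rw [sub_t_of_reverse ht hh, if_neg (hne j)]
  · rw [sub_h_of_reverse ht hh, if_neg (hne j)]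
  · exact hε _ (S.orderIsoOfFin rfl j).2

end Reverse

end GaussDiagram

namespace GaussDiagram2

variable {n p q : ℕ} (G : GaussDiagram2 n p q)

lemma mu_t (i : Fin n) : G.mu (G.t i) = G.h i := by
  simp only [mu]
  rw [show G.t i = G.ends (Sum.inl i) from rfl, Equiv.symm_apply_apply]
  rfl

lemma mu_h (i : Fin n) : G.mu (G.h i) = G.t i := by
  simp only [mu]
  rw [show G.h i = G.ends (Sum.inr i) from rfl, Equiv.symm_apply_apply]
  rfl

lemma mem_posSet_iff {S : Finset (Fin n)} {w : Fin p ⊕ Fin q} :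
    w ∈ G.posSet S ↔ ∃ i ∈ S, G.t i = w ∨ G.h i = w := by
  simp only [posSet, mem_union, mem_image]
  aesop

lemma sigma_eq (u : Fin p ⊕ Fin q) : G.sigma u = Sum.map cycSucc cycSucc (G.mu u) := rfl

open Classical in
lemma tau_eq_find (hp : 0 < p) {o u : Fin p ⊕ Fin q} (ho : o = Sum.inl ⟨0, hp⟩)
    (hu : ∃ k, G.sigma^[k] o = u) : G.tau u = Nat.find hu := by
  subst ho
  rw [tau, dif_pos hp, dif_pos hu]

end GaussDiagram2

/-- `G₀` is the smoothing of `G` along the arrow `x`; the arrows of `G₀` are those of `G` other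
than `x`, numbered by `e`. Signs play no role here. -/
structure IsSmoothing {N m p q : ℕ} (G : GaussDiagram N) (x : Fin N) (e : Fin m → Fin N)
    (G₀ : GaussDiagram2 m p q) (a b : ℕ) : Prop where
  a_eq : a = min (G.t x : ℕ) (G.h x : ℕ)
  b_eq : b = max (G.t x : ℕ) (G.h x : ℕ)
  p_eq : p = a + (2 * N - 1 - b)
  q_eq : q = b - a - 1
  ne_iff_exists : ∀ j, j ≠ x ↔ ∃ i, e i = j
  t_eq : ∀ i, Sum.map Fin.val Fin.val (G₀.t i) = smoothPos a b (G.t (e i))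
  h_eq : ∀ i, Sum.map Fin.val Fin.val (G₀.h i) = smoothPos a b (G.h (e i))

namespace IsSmoothing

variable {N m p q a b : ℕ} {G : GaussDiagram N} {x : Fin N} {e : Fin m → Fin N}
  {G₀ : GaussDiagram2 m p q} (hs : IsSmoothing G x e G₀ a b)
include hs

lemma endpoints :
    (G.t x : ℕ) = a ∧ (G.h x : ℕ) = b ∨ (G.t x : ℕ) = b ∧ (G.h x : ℕ) = a := by
  rcases le_total (G.t x : ℕ) (G.h x) with h | h
  · left; constructor <;> simp [hs.a_eq, hs.b_eq, h]
  · right; constructor <;> simp [hs.a_eq, hs.b_eq, h]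

lemma a_lt_b : a < b := by
  have hne : (G.t x : ℕ) ≠ G.h x := fun h => G.t_ne_h x x (Fin.ext h)
  have := hs.a_eq
  have := hs.b_eq
  omega

lemma b_lt : b < 2 * N := by
  rcases hs.endpoints with ⟨-, h⟩ | ⟨h, -⟩ <;> omega

lemma val_ne_of_ne {i : Fin N} (hi : i ≠ x) :
    ((G.t i : ℕ) ≠ a ∧ (G.t i : ℕ) ≠ b) ∧ ((G.h i : ℕ) ≠ a ∧ (G.h i : ℕ) ≠ b) := by
  have ht1 : (G.t i : ℕ) ≠ G.t x := fun h => hi (G.t_injective (Fin.ext h))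
  have ht2 : (G.t i : ℕ) ≠ G.h x := fun h => G.t_ne_h i x (Fin.ext h)
  have hh1 : (G.h i : ℕ) ≠ G.t x := fun h => G.t_ne_h x i (Fin.ext h).symm
  have hh2 : (G.h i : ℕ) ≠ G.h x := fun h => hi (G.h_injective (Fin.ext h))
  rcases hs.endpoints with ⟨h1, h2⟩ | ⟨h1, h2⟩ <;> omega

lemma e_ne (i : Fin m) : e i ≠ x := (hs.ne_iff_exists _).2 ⟨i, rfl⟩

lemma exists_P_Q : ∃ P Q : Fin (2 * N), (P : ℕ) = a ∧ (Q : ℕ) = b :=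
  ⟨⟨a, hs.a_lt_b.trans hs.b_lt⟩, ⟨b, hs.b_lt⟩, rfl, rfl⟩

section Endpoints

variable {P Q : Fin (2 * N)} (hP : (P : ℕ) = a) (hQ : (Q : ℕ) = b)
include hP hQ

lemma mu_P_and_mu_Q : G.mu P = Q ∧ G.mu Q = P := by
  rcases hs.endpoints with ⟨h1, h2⟩ | ⟨h1, h2⟩
  · obtain rfl : P = G.t x := Fin.ext (by omega)
    obtain rfl : Q = G.h x := Fin.ext (by omega)
    exact ⟨G.mu_t x, G.mu_h x⟩
  · obtain rfl : P = G.h x := Fin.ext (by omega)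
    obtain rfl : Q = G.t x := Fin.ext (by omega)
    exact ⟨G.mu_h x, G.mu_t x⟩

lemma exists_t_or_h_eq {y : Fin (2 * N)} (hyP : y ≠ P) (hyQ : y ≠ Q) :
    ∃ i, G.t (e i) = y ∨ G.h (e i) = y := by
  obtain ⟨j, hj⟩ := G.exists_t_or_h y
  have hjx : j ≠ x := by
    rintro rfl
    rcases hs.endpoints with ⟨h1, h2⟩ | ⟨h1, h2⟩ <;> rcases hj with rfl | rfl
    exacts [hyP (Fin.ext (by omega)), hyQ (Fin.ext (by omega)), hyQ (Fin.ext (by omega)),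
      hyP (Fin.ext (by omega))]
  obtain ⟨i, rfl⟩ := (hs.ne_iff_exists j).1 hjx
  exact ⟨i, hj⟩

variable (hp : 1 ≤ p) (hq : 1 ≤ q)
include hp hq

omit hq in
lemma sigma_P_ne : G.sigma P ≠ P ∧ G.sigma P ≠ Q := by
  have hv : ((G.sigma P : Fin (2 * N)) : ℕ) = if b + 1 = 2 * N then 0 else b + 1 := by
    rw [G.sigma_eq_cycSucc_mu, (hs.mu_P_and_mu_Q hP hQ).1, cycSucc_val, hQ]
  have := hs.p_eq
  have := hs.a_lt_b
  constructor <;> intro h <;> have h' := congrArg Fin.val h <;> split_ifs at hv <;> omega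

omit hp in
lemma sigma_Q_ne : G.sigma Q ≠ P ∧ G.sigma Q ≠ Q := by
  have hv : ((G.sigma Q : Fin (2 * N)) : ℕ) = if a + 1 = 2 * N then 0 else a + 1 := by
    rw [G.sigma_eq_cycSucc_mu, (hs.mu_P_and_mu_Q hP hQ).2, cycSucc_val, hP]
  have := hs.q_eq
  have := hs.b_lt
  constructor <;> intro h <;> have h' := congrArg Fin.val h <;> split_ifs at hv <;> omega

local notation "ψ" => smoothPosFin hp hq a b

lemma smoothPosFin_injOn {y z : Fin (2 * N)} (hyP : y ≠ P) (hyQ : y ≠ Q) (hzP : z ≠ P)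
    (hzQ : z ≠ Q) (h : ψ y = ψ z) : y = z :=
  _root_.smoothPosFin_injOn hp hq hs.p_eq hs.q_eq hs.a_lt_b hs.b_lt
    (fun h => hyP (Fin.ext (by omega))) (fun h => hyQ (Fin.ext (by omega)))
    (fun h => hzP (Fin.ext (by omega))) (fun h => hzQ (Fin.ext (by omega))) h

lemma exists_smoothPosFin_eq (u : Fin p ⊕ Fin q) : ∃ y, y ≠ P ∧ y ≠ Q ∧ ψ y = u := by
  obtain ⟨y, h1, h2, h3⟩ := _root_.exists_smoothPosFin_eq hp hq hs.p_eq hs.q_eq hs.a_lt_b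
    hs.b_lt u
  exact ⟨y, fun h => h1 (by rw [h, hP]), fun h => h2 (by rw [h, hQ]), h3⟩

omit hP hQ in
lemma t_eq_smoothPosFin (i : Fin m) : G₀.t i = ψ (G.t (e i)) := by
  obtain ⟨⟨h1, h2⟩, -⟩ := hs.val_ne_of_ne (hs.e_ne i)
  exact sumMap_val_injective (by rw [hs.t_eq, sumMap_val_smoothPosFin hp hq hs.p_eq hs.q_eq
    hs.a_lt_b hs.b_lt h1 h2])

omit hP hQ in
lemma h_eq_smoothPosFin (i : Fin m) : G₀.h i = ψ (G.h (e i)) := by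
  obtain ⟨-, h1, h2⟩ := hs.val_ne_of_ne (hs.e_ne i)
  exact sumMap_val_injective (by rw [hs.h_eq, sumMap_val_smoothPosFin hp hq hs.p_eq hs.q_eq
    hs.a_lt_b hs.b_lt h1 h2])

lemma mu_smoothPosFin {y : Fin (2 * N)} (hyP : y ≠ P) (hyQ : y ≠ Q) :
    G₀.mu (ψ y) = ψ (G.mu y) := by
  obtain ⟨i, rfl | rfl⟩ := hs.exists_t_or_h_eq hP hQ hyP hyQ
  · rw [← hs.t_eq_smoothPosFin hp hq, G₀.mu_t, G.mu_t, hs.h_eq_smoothPosFin hp hq]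
  · rw [← hs.h_eq_smoothPosFin hp hq, G₀.mu_h, G.mu_h, hs.t_eq_smoothPosFin hp hq]

lemma sigma_smoothPosFin {y : Fin (2 * N)} (hyP : y ≠ P) (hyQ : y ≠ Q) :
    G₀.sigma (ψ y) = ψ (skipPair G.sigma P Q y) := by
  obtain ⟨hμP, hμQ⟩ := hs.mu_P_and_mu_Q hP hQ
  have hzP : G.mu y ≠ P := fun h => hyQ (by rw [← G.mu_involutive y, h, hμP])
  have hzQ : G.mu y ≠ Q := fun h => hyP (by rw [← G.mu_involutive y, h, hμQ])
  rw [G₀.sigma_eq, hs.mu_smoothPosFin hP hQ hp hq hyP hyQ]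
  refine cycSucc_smoothPosFin hp hq hs.p_eq hs.q_eq hs.a_lt_b hs.b_lt _ _
    (fun h => hzP (Fin.ext (by omega))) (fun h => hzQ (Fin.ext (by omega))) ?_
  have hσ : ∀ v, ((G.sigma v : Fin (2 * N)) : ℕ) = ((G.mu v : ℕ) + 1) % (2 * N) :=
    fun _ => rfl
  have hPv : ∀ {v : Fin (2 * N)}, v ≠ P → (v : ℕ) ≠ a := fun h h' => h (Fin.ext (h'.trans hP.symm))
  have hQv : ∀ {v : Fin (2 * N)}, v ≠ Q → (v : ℕ) ≠ b := fun h h' => h (Fin.ext (h'.trans hQ.symm))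
  unfold skipPair
  rw [← hσ y]
  by_cases h1 : G.sigma y = P
  · rw [if_pos (Or.inl h1), h1, hσ P, hμP, hQ, hP, if_pos rfl]
  by_cases h2 : G.sigma y = Q
  · rw [if_pos (Or.inr h2), h2, hσ Q, hμQ, hP, hQ, if_neg hs.a_lt_b.ne', if_pos rfl]
  · rw [if_neg (by tauto), if_neg (hPv h1), if_neg (hQv h2)]

lemma smoothPosFin_skipStart_zero (hN : 0 < 2 * N) :
    ψ (skipStart G.sigma P Q ⟨0, hN⟩) = Sum.inl ⟨0, hp⟩ := by
  have hab := hs.a_lt_b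
  have hpe := hs.p_eq
  by_cases ha0 : a = 0
  · have hoP : (⟨0, hN⟩ : Fin (2 * N)) = P := Fin.ext (by simp [hP, ha0])
    have hs0 : skipStart G.sigma P Q ⟨0, hN⟩ = G.sigma P := by simp [skipStart, hoP]
    have hval : ((G.sigma P : Fin (2 * N)) : ℕ) = b + 1 := by
      rw [G.sigma_eq_cycSucc_mu, (hs.mu_P_and_mu_Q hP hQ).1, cycSucc_val, hQ, if_neg (by omega)]
    rw [hs0]
    apply sumMap_val_injective
    rw [sumMap_val_smoothPosFin hp hq hs.p_eq hs.q_eq hab hs.b_lt (by omega) (by omega), hval]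
    simp only [smoothPos, Sum.map_inl]
    rw [if_neg (by omega), if_neg (by omega)]
    simp only [Sum.inl.injEq]
    omega
  · rw [skipStart_of_ne (fun h => ha0 (by rw [← hP, ← h])) (fun h => by
      have := congrArg Fin.val h; simp only at this; omega)]
    apply sumMap_val_injective
    rw [sumMap_val_smoothPosFin hp hq hs.p_eq hs.q_eq hab hs.b_lt (by simp; omega)
      (by simp; omega)]
    simp [smoothPos, Nat.pos_of_ne_zero ha0]

end Endpoints

lemma not_oneComponent_of_degenerate (h : p = 0 ∨ q = 0) : ¬G.OneComponent := by
  obtain ⟨P, Q, hP, hQ⟩ := hs.exists_P_Q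
  obtain ⟨hμP, hμQ⟩ := hs.mu_P_and_mu_Q hP hQ
  have := hs.p_eq
  have := hs.q_eq
  have := hs.a_lt_b
  have := hs.b_lt
  rcases h with h | h
  · refine G.not_oneComponent_of_sigma_eq_self (by omega) (y := P) (Fin.ext ?_)
    rw [G.sigma_eq_cycSucc_mu, hμP, cycSucc_val, hQ, hP, if_pos (by omega)]
    omega
  · refine G.not_oneComponent_of_sigma_eq_self (by omega) (y := Q) (Fin.ext ?_)
    rw [G.sigma_eq_cycSucc_mu, hμQ, cycSucc_val, hP, hQ, if_neg (by omega)]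
    omega

lemma oneComponent_iff : G₀.OneComponent ↔ G.OneComponent := by
  by_cases hpq : 1 ≤ p ∧ 1 ≤ q
  · obtain ⟨P, Q, hP, hQ⟩ := hs.exists_P_Q
    obtain ⟨hp, hq⟩ := hpq
    rw [GaussDiagram2.OneComponent, GaussDiagram.OneComponent, and_iff_right hp,
      and_iff_right hq]
    exact (transitive_iff_of_skipPair (ψ := smoothPosFin hp hq a b) (hs.sigma_P_ne hP hQ hp)
      (hs.sigma_Q_ne hP hQ hq)
      (fun _ hyP hyQ => hs.sigma_smoothPosFin hP hQ hp hq hyP hyQ)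
      (fun _ _ hyP hyQ hzP hzQ => hs.smoothPosFin_injOn hP hQ hp hq hyP hyQ hzP hzQ)
      (hs.exists_smoothPosFin_eq hP hQ hp hq) G.sigma_bijective.2).symm
  · exact iff_of_false (fun h => hpq ⟨h.1, h.2.1⟩) (hs.not_oneComponent_of_degenerate (by omega))

lemma tau_lt_iff (hoc : G.OneComponent) {P Q : Fin (2 * N)} (hP : (P : ℕ) = a)
    (hQ : (Q : ℕ) = b) (hp : 1 ≤ p) (hq : 1 ≤ q) {y z : Fin (2 * N)} (hyP : y ≠ P)
    (hyQ : y ≠ Q) (hzP : z ≠ P) (hzQ : z ≠ Q) :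
    G₀.tau (smoothPosFin hp hq a b y) < G₀.tau (smoothPosFin hp hq a b z) ↔
      G.tau y < G.tau z := by
  classical
  have hN : 0 < 2 * N := by have := hs.b_lt; omega
  have h0 := hs.smoothPosFin_skipStart_zero hP hQ hp hq hN
  have hg : ∀ u, ∃ k, G₀.sigma^[k] (smoothPosFin hp hq a b (skipStart G.sigma P Q ⟨0, hN⟩)) = u :=
    (hs.oneComponent_iff.2 hoc).2.2 _
  rw [G₀.tau_eq_find hp h0 (hg _), G₀.tau_eq_find hp h0 (hg _), G.tau_eq_find (hoc _ y),
    G.tau_eq_find (hoc _ z)]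
  exact find_lt_find_iff_of_skipPair (ψ := smoothPosFin hp hq a b) (hs.sigma_P_ne hP hQ hp)
    (hs.sigma_Q_ne hP hQ hq)
    (fun _ hyP hyQ => hs.sigma_smoothPosFin hP hQ hp hq hyP hyQ)
    (fun _ _ hyP hyQ hzP hzQ => hs.smoothPosFin_injOn hP hQ hp hq hyP hyQ hzP hzQ)
    hyP hyQ hzP hzQ _ _ _ _

lemma ascending_iff (hoc : G.OneComponent) :
    G₀.Ascending ↔ ∀ j ≠ x, G.tau (G.t j) < G.tau (G.h j) := by
  obtain ⟨P, Q, hP, hQ⟩ := hs.exists_P_Q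
  obtain ⟨hp, hq, -⟩ := hs.oneComponent_iff.2 hoc
  have hne : ∀ {y : Fin (2 * N)}, (y : ℕ) ≠ a ∧ (y : ℕ) ≠ b → y ≠ P ∧ y ≠ Q :=
    fun h => ⟨fun h' => h.1 (h' ▸ hP), fun h' => h.2 (h' ▸ hQ)⟩
  have key : ∀ i, G₀.tau (G₀.t i) < G₀.tau (G₀.h i) ↔ G.tau (G.t (e i)) < G.tau (G.h (e i)) := by
    intro i
    obtain ⟨ht, hh⟩ := hs.val_ne_of_ne (hs.e_ne i)
    rw [hs.t_eq_smoothPosFin hp hq, hs.h_eq_smoothPosFin hp hq]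
    exact hs.tau_lt_iff hoc hP hQ hp hq (hne ht).1 (hne ht).2 (hne hh).1 (hne hh).2
  simp only [GaussDiagram2.Ascending, key]
  constructor
  · intro h j hj
    obtain ⟨i, rfl⟩ := (hs.ne_iff_exists j).1 hj
    exact h i
  · exact fun h i => h _ (hs.e_ne i)

end IsSmoothing

lemma GaussDiagram2.sumMap_val_renum {p q : ℕ} (E : Finset (Fin p ⊕ Fin q)) (u : Fin p ⊕ Fin q)
    (hu : u ∈ E) :
    Sum.map Fin.val Fin.val (renum E u hu) =
      Sum.map (rankIn ((E.image (Sum.map Fin.val Fin.val)).toLeft))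
        (rankIn ((E.image (Sum.map Fin.val Fin.val)).toRight)) (Sum.map Fin.val Fin.val u) := by
  rw [Finset.toLeft_image_sumMap, Finset.toRight_image_sumMap]
  rcases u with u | u <;> simp only [renum, Sum.map_inl, Sum.map_inr, Sum.inl.injEq, Sum.inr.injEq]
  · rw [rankIn_image (Fin.val_strictMono.strictMonoOn _) (mem_toLeft.2 hu)]
    exact coe_orderIsoOfFin_symm _ _ _
  · rw [rankIn_image (Fin.val_strictMono.strictMonoOn _) (mem_toRight.2 hu)]
    exact coe_orderIsoOfFin_symm _ _ _

lemma GaussDiagram.mem_posSet_insert_image {N m : ℕ} (G : GaussDiagram N) (x : Fin N)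
    (e : Fin m → Fin N) (T : Finset (Fin m)) {w : Fin (2 * N)} :
    w ∈ G.posSet (insert x (T.image e)) ↔
      w = G.t x ∨ w = G.h x ∨ ∃ i ∈ T, G.t (e i) = w ∨ G.h (e i) = w := by
  simp only [G.mem_posSet_iff, mem_insert, mem_image, exists_eq_or_imp]
  constructor
  · rintro (h | ⟨j, ⟨i, hi, rfl⟩, h⟩)
    · rcases h with h | h
      exacts [Or.inl h.symm, Or.inr (Or.inl h.symm)]
    · exact Or.inr (Or.inr ⟨i, hi, h⟩)
  · rintro (h | h | ⟨i, hi, h⟩)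
    exacts [Or.inl (Or.inl h.symm), Or.inl (Or.inr h.symm), Or.inr ⟨e i, ⟨i, hi, rfl⟩, h⟩]

namespace IsSmoothing

variable {N m p q a b : ℕ} {G : GaussDiagram N} {x : Fin N} {e : Fin m → Fin N}
  {G₀ : GaussDiagram2 m p q} (hs : IsSmoothing G x e G₀ a b) {T : Finset (Fin m)}
include hs

lemma image_posSet_sub :
    (G₀.posSet T).image (Sum.map Fin.val Fin.val) =
      smoothSet ((G.posSet (insert x (T.image e))).image Fin.val) a b := by
  have hne := fun i => hs.val_ne_of_ne (hs.e_ne i)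
  ext u
  simp only [smoothSet, mem_image, mem_erase, G₀.mem_posSet_iff, G.mem_posSet_insert_image]
  constructor
  · rintro ⟨_, ⟨i, hi, rfl | rfl⟩, rfl⟩
    · exact ⟨_, ⟨(hne i).1.2, (hne i).1.1, _, Or.inr (Or.inr ⟨i, hi, Or.inl rfl⟩), rfl⟩,
        (hs.t_eq i).symm⟩
    · exact ⟨_, ⟨(hne i).2.2, (hne i).2.1, _, Or.inr (Or.inr ⟨i, hi, Or.inr rfl⟩), rfl⟩,
        (hs.h_eq i).symm⟩
  · rintro ⟨_, ⟨hb, ha, w, hw, rfl⟩, rfl⟩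
    rcases hw with rfl | rfl | ⟨i, hi, rfl | rfl⟩
    · rcases hs.endpoints with h | h <;> omega
    · rcases hs.endpoints with h | h <;> omega
    · exact ⟨_, ⟨i, hi, Or.inl rfl⟩, hs.t_eq i⟩
    · exact ⟨_, ⟨i, hi, Or.inr rfl⟩, hs.h_eq i⟩

lemma sub {S : Finset (Fin N)} (hS : S = insert x (T.image e)) :
    ∃ x' e' a' b', (S.orderIsoOfFin rfl x' : Fin N) = x ∧
      IsSmoothing (G.sub S) x' e' (G₀.sub T) a' b' := by
  subst hS
  set S := insert x (T.image e)
  set P := (G.posSet S).image Fin.val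
  have hxS : x ∈ S := mem_insert_self _ _
  have heS : ∀ j, e (T.orderIsoOfFin rfl j) ∈ S :=
    fun j => mem_insert_of_mem (mem_image_of_mem _ (T.orderIsoOfFin rfl j).2)
  have hmem : ∀ {w : Fin (2 * N)}, w ∈ G.posSet S → (w : ℕ) ∈ P := fun hw => mem_image_of_mem _ hw
  have haP : a ∈ P ∧ b ∈ P := by
    have ht := hmem (G.mem_posSet_t hxS)
    have hh := hmem (G.mem_posSet_h hxS)
    rcases hs.endpoints with ⟨h1, h2⟩ | ⟨h1, h2⟩
    exacts [⟨h1 ▸ ht, h2 ▸ hh⟩, ⟨h2 ▸ hh, h1 ▸ ht⟩]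
  have hab := hs.a_lt_b
  have hcard : #P = 2 * #S := by
    rw [card_image_of_injective _ Fin.val_injective, G.posSet_card]
  have himage := hs.image_posSet_sub (T := T)
  have hE : ∀ u (hu : u ∈ G₀.posSet T), Sum.map Fin.val Fin.val (GaussDiagram2.renum _ u hu) =
      Sum.map (rankIn (smoothSet P a b).toLeft) (rankIn (smoothSet P a b).toRight)
        (Sum.map Fin.val Fin.val u) := by
    intro u hu
    rw [GaussDiagram2.sumMap_val_renum, himage]
  refine ⟨(S.orderIsoOfFin rfl).symm ⟨x, hxS⟩,
    fun j => (S.orderIsoOfFin rfl).symm ⟨_, heS j⟩, rankIn P a, rankIn P b,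
    by simp, ⟨?_, ?_, ?_, ?_, ?_, ?_, ?_⟩⟩
  · simp only [GaussDiagram.sub_t_val, GaussDiagram.sub_h_val, OrderIso.apply_symm_apply]
    rw [hs.a_eq, rankIn_mono.map_min]
  · simp only [GaussDiagram.sub_t_val, GaussDiagram.sub_h_val, OrderIso.apply_symm_apply]
    rw [hs.b_eq, rankIn_mono.map_max]
  · rw [← card_image_of_injective (G₀.posSet T).toLeft Fin.val_injective,
      ← toLeft_image_sumMap _ _ (Fin.val (n := q)), himage,
      card_toLeft_smoothSet haP.1 haP.2 hab, hcard]
  · rw [← card_image_of_injective (G₀.posSet T).toRight Fin.val_injective,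
      ← toRight_image_sumMap _ (Fin.val (n := p)), himage,
      card_toRight_smoothSet haP.1 hab]
  · intro j
    rw [Ne, ← orderIsoOfFin_coe_eq_iff hxS]
    constructor
    · intro hj
      obtain ⟨i, hi, hij⟩ := mem_image.1 ((mem_insert.1 (S.orderIsoOfFin rfl j).2).resolve_left hj)
      refine ⟨(T.orderIsoOfFin rfl).symm ⟨i, hi⟩, ?_⟩
      rw [OrderIso.symm_apply_eq, Subtype.ext_iff]
      simp [hij]
    · rintro ⟨i, rfl⟩
      simpa using hs.e_ne _
  · intro i
    have hne := hs.val_ne_of_ne (hs.e_ne (T.orderIsoOfFin rfl i))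
    simp only [GaussDiagram2.sub, hE, hs.t_eq, GaussDiagram.sub_t_val, OrderIso.apply_symm_apply]
    rw [smoothPos_rankIn haP.1 haP.2 hab (hmem (G.mem_posSet_t (heS i))) hne.1.1 hne.1.2]
  · intro i
    have hne := hs.val_ne_of_ne (hs.e_ne (T.orderIsoOfFin rfl i))
    simp only [GaussDiagram2.sub, hE, hs.h_eq, GaussDiagram.sub_h_val, OrderIso.apply_symm_apply]
    rw [smoothPos_rankIn haP.1 haP.2 hab (hmem (G.mem_posSet_h (heS i))) hne.2.1 hne.2.2]

end IsSmoothing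

lemma sum_insert_image_succAbove {M : Type*} [AddCommMonoid M] {m : ℕ} (x : Fin (m + 1))
    (f : Finset (Fin (m + 1)) → M) :
    ∑ T : Finset (Fin m), f (insert x (T.image x.succAbove)) = ∑ S with x ∈ S, f S := by
  refine sum_nbij' (fun T => insert x (T.image x.succAbove))
    (fun S => ({i | x.succAbove i ∈ S} : Finset (Fin m)))
    (by simp) (by simp) (fun T _ => ?_) (fun S hS => ?_) (fun _ _ => rfl)
  · ext i
    simp [Fin.succAbove_ne]
  · ext i
    by_cases hi : i = x
    · simp_all
    · obtain ⟨j, rfl⟩ := Fin.exists_succAbove_eq hi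
      simp [hi]

section Skein

open Classical

variable {m : ℕ} {Gp Gm : GaussDiagram (m + 1)} {x : Fin (m + 1)}
  (hmt : Gm.t = Function.update Gp.t x (Gp.h x)) (hmh : Gm.h = Function.update Gp.h x (Gp.t x))
  (hme : Gm.ε = Function.update Gp.ε x (-1))
include hmt hmh hme

lemma skein_term_of_notMem {S : Finset (Fin (m + 1))} (hxS : x ∉ S) (k : ℕ) :
    ((if #S = k ∧ Gp.OneComponentSub S ∧ Gp.AscendingSub S then ∏ i ∈ S, Gp.ε i else 0) -
      if #S = k ∧ Gm.OneComponentSub S ∧ Gm.AscendingSub S then ∏ i ∈ S, Gm.ε i else 0) = 0 := by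
  have hε : ∀ i ∈ S, Gm.ε i = Gp.ε i := fun i hi => by
    rw [hme, Function.update_of_ne (ne_of_mem_of_not_mem hi hxS)]
  have hsub := GaussDiagram.sub_eq_of_reverse_of_notMem hmt hmh hxS hε
  have hoc : Gm.OneComponentSub S ↔ Gp.OneComponentSub S := by
    simp only [GaussDiagram.OneComponentSub, hsub]
  have hasc : Gm.AscendingSub S ↔ Gp.AscendingSub S := by
    simp only [GaussDiagram.AscendingSub, hsub]
  simp only [hoc, hasc, prod_congr rfl hε, sub_self]

omit hmt hmh in
lemma prod_sign_insert_image (hx : Gp.ε x = 1) {p q : ℕ} {G0 : GaussDiagram2 m p q}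
    (h0e : ∀ i : Fin m, G0.ε i = Gp.ε (x.succAbove i)) (T : Finset (Fin m)) :
    ∏ i ∈ insert x (T.image x.succAbove), Gp.ε i = ∏ i ∈ T, G0.ε i ∧
      ∏ i ∈ insert x (T.image x.succAbove), Gm.ε i = -∏ i ∈ T, G0.ε i := by
  have hxT : x ∉ T.image x.succAbove := by simp [Fin.succAbove_ne]
  have hprod : ∏ i ∈ T.image x.succAbove, Gp.ε i = ∏ i ∈ T, G0.ε i := by
    rw [prod_image fun _ _ _ _ h => Fin.succAbove_right_injective h]
    exact prod_congr rfl fun i _ => (h0e i).symm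
  refine ⟨by rw [prod_insert hxT, hx, one_mul, hprod], ?_⟩
  rw [prod_insert hxT, hme, Function.update_self, ← hprod, neg_one_mul]
  exact congrArg _ (prod_congr rfl fun i hi =>
    Function.update_of_ne (ne_of_mem_of_not_mem hi hxT) _ _)

lemma skein_term_of_mem (hx : Gp.ε x = 1) {p q a b : ℕ} {G0 : GaussDiagram2 m p q}
    (hs : IsSmoothing Gp x x.succAbove G0 a b) (h0e : ∀ i : Fin m, G0.ε i = Gp.ε (x.succAbove i))
    (k : ℕ) {S : Finset (Fin (m + 1))} {T : Finset (Fin m)}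
    (hS : S = insert x (T.image x.succAbove)) :
    ((if #S = k + 1 ∧ Gp.OneComponentSub S ∧ Gp.AscendingSub S then ∏ i ∈ S, Gp.ε i else 0) -
      if #S = k + 1 ∧ Gm.OneComponentSub S ∧ Gm.AscendingSub S then ∏ i ∈ S, Gm.ε i else 0) =
      if #T = k ∧ G0.OneComponentSub T ∧ G0.AscendingSub T then ∏ i ∈ T, G0.ε i else 0 := by
  obtain ⟨x', e', a', b', hx', hs'⟩ := hs.sub hS
  obtain ⟨hprodp, hprodm⟩ := hS ▸ prod_sign_insert_image hme hx h0e T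
  have hxS : x ∈ S := hS ▸ mem_insert_self _ _
  have hcard : #S = #T + 1 := by
    rw [hS, card_insert_of_notMem (by simp [Fin.succAbove_ne]),
      card_image_of_injective _ Fin.succAbove_right_injective]
  obtain ⟨hrt, hrh⟩ := GaussDiagram.sub_reverse_of_mem hmt hmh hxS
  rw [← (orderIsoOfFin_coe_eq_iff hxS x').1 hx'] at hrt hrh
  simp only [GaussDiagram.OneComponentSub, GaussDiagram.AscendingSub,
    GaussDiagram2.OneComponentSub, GaussDiagram2.AscendingSub, hprodp, hprodm, hcard,
    Nat.add_right_cancel_iff,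
    GaussDiagram.oneComponent_iff_of_reverse hrt hrh, hs'.oneComponent_iff]
  by_cases hc : #T = k ∧ (Gp.sub S).OneComponent
  · obtain ⟨hor, hnand⟩ := GaussDiagram.ascending_xor_ascending_of_reverse hrt hrh hc.2
    rw [← hs'.ascending_iff hc.2] at hor
    by_cases hA : (Gp.sub S).Ascending
    · have hB : ¬(Gm.sub S).Ascending := fun h => hnand ⟨hA, h⟩
      simp [hc, hA, hB, hor.1 (Or.inl hA)]
    · by_cases hB : (Gm.sub S).Ascending
      · simp [hc, hA, hB, hor.1 (Or.inr hB)]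
      · simp [hc, hA, hB, mt hor.2 (by tauto)]
  · rw [if_neg (by tauto), if_neg (by tauto), if_neg (by tauto), sub_zero]

end Skein

theorem conway_skein_knot {m : ℕ} (Gp Gm : GaussDiagram (m + 1)) (x : Fin (m + 1))
    (hx : Gp.ε x = 1)
    (hmt : Gm.t = Function.update Gp.t x (Gp.h x))
    (hmh : Gm.h = Function.update Gp.h x (Gp.t x))
    (hme : Gm.ε = Function.update Gp.ε x (-1))
    {p q : ℕ} (G0 : GaussDiagram2 m p q)
    (a b : ℕ) (ha : a = min (Gp.t x : ℕ) (Gp.h x : ℕ)) (hb : b = max (Gp.t x : ℕ) (Gp.h x : ℕ))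
    (hp : p = a + (2 * (m + 1) - 1 - b)) (hq : q = b - a - 1)
    (h0t : ∀ i : Fin m,
      Sum.map Fin.val Fin.val (G0.t i) = smoothPos a b (Gp.t (x.succAbove i) : ℕ))
    (h0h : ∀ i : Fin m,
      Sum.map Fin.val Fin.val (G0.h i) = smoothPos a b (Gp.h (x.succAbove i) : ℕ))
    (h0e : ∀ i : Fin m, G0.ε i = Gp.ε (x.succAbove i))
    (n : ℕ) (hn : 1 ≤ n) :
    Gp.F (2 * n) - Gm.F (2 * n) = G0.F (2 * n - 1) := by
  have hs : IsSmoothing Gp x x.succAbove G0 a b :=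
    ⟨ha, hb, hp, hq, fun _ => Fin.exists_succAbove_eq_iff.symm, h0t, h0h⟩
  obtain ⟨k, hk⟩ : ∃ k, 2 * n = k + 1 := ⟨2 * n - 1, by omega⟩
  rw [hk, Nat.add_sub_cancel, GaussDiagram.F, GaussDiagram.F, GaussDiagram2.F,
    ← sum_sub_distrib, ← sum_filter_add_sum_filter_not univ (x ∈ ·),
    sum_eq_zero fun S hS => skein_term_of_notMem hmt hmh hme (mem_filter.1 hS).2 _, add_zero,
    ← sum_insert_image_succAbove]
  exact sum_congr rfl fun T _ => skein_term_of_mem hmt hmh hme hx hs h0e k rfl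
end

section
/- Vanishing on descending diagrams: Let G be a one-circle based Gauss diagram with n arrows such that every arrow i satisfies t i < h i (i.e., traveling along the circle from the base point, every arrow's tail is passed before its head; such a diagram is called descending). Then F_k(G) = 0 for every k ≥ 1. -/
open Finset

lemma GaussDiagram.not_ascending_of_descending {m : ℕ} (hm : 1 ≤ m) (G : GaussDiagram m)
    (hdesc : ∀ i, (G.t i : ℕ) < (G.h i : ℕ)) (hoc : G.OneComponent) :
    ¬ G.Ascending := by
  intro hasc
  have h2m : 0 < 2 * m := by omega
  set M : Fin (2 * m) := ⟨2 * m - 1, by omega⟩ with hM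
  obtain ⟨i, hi⟩ : ∃ i, G.h i = M := by
    rcases hsymm : G.ends.symm M with j | j
    · exfalso
      have hMe : G.t j = M := by
        have := congrArg G.ends hsymm
        rw [Equiv.apply_symm_apply] at this
        exact this.symm
      have h1 : (G.t j : ℕ) = 2 * m - 1 := congrArg Fin.val hMe
      have h2 := hdesc j
      have h3 := (G.h j).isLt
      omega
    · refine ⟨j, ?_⟩
      have := congrArg G.ends hsymm
      rw [Equiv.apply_symm_apply] at this
      exact this.symm
  have hmu : G.mu (G.t i) = G.h i := by
    have hsym : G.ends.symm (G.t i) = Sum.inl i := by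
      rw [Equiv.symm_apply_eq]; rfl
    rw [GaussDiagram.mu, hsym]; rfl
  have hsig : G.sigma (G.t i) = ⟨0, h2m⟩ := by
    have hval : (G.mu (G.t i) : ℕ) = 2 * m - 1 := by rw [hmu, hi]
    apply Fin.ext
    show ((G.mu (G.t i) : ℕ) + 1) % (2 * m) = 0
    rw [hval, Nat.sub_add_cancel (by omega : 1 ≤ 2 * m), Nat.mod_self]
  have hex_t : ∃ k : ℕ, (G.sigma)^[k] ⟨0, h2m⟩ = G.t i := hoc _ _
  have hex_h : ∃ k : ℕ, (G.sigma)^[k] ⟨0, h2m⟩ = G.h i := hoc _ _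
  have hti : G.tau (G.t i) = Nat.find hex_t := dif_pos hex_t
  have hhi : G.tau (G.h i) = Nat.find hex_h := dif_pos hex_h
  have hba : Nat.find hex_t < Nat.find hex_h := by
    have := hasc i; rwa [hti, hhi] at this
  have hret : (G.sigma)^[Nat.find hex_t + 1] ⟨0, h2m⟩ = ⟨0, h2m⟩ := by
    rw [Function.iterate_succ_apply', Nat.find_spec hex_t, hsig]
  have hsmall : (G.sigma)^[Nat.find hex_h - (Nat.find hex_t + 1)] ⟨0, h2m⟩ = G.h i := by
    have hdecomp : Nat.find hex_h =
        (Nat.find hex_h - (Nat.find hex_t + 1)) + (Nat.find hex_t + 1) := by omega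
    have := Nat.find_spec hex_h
    rw [hdecomp, Function.iterate_add_apply, hret] at this
    exact this
  exact Nat.find_min hex_h (by omega) hsmall

theorem F_vanish_of_descending {n : ℕ} (G : GaussDiagram n)
    (hdesc : ∀ i : Fin n, (G.t i : ℕ) < (G.h i : ℕ)) (k : ℕ) (hk : 1 ≤ k) :
    G.F k = 0 := by
  rw [GaussDiagram.F]
  refine Finset.sum_eq_zero fun S _ => ?_
  have hneg : ¬ (S.card = k ∧ G.OneComponentSub S ∧ G.AscendingSub S) := by
    rintro ⟨hcard, hoc, hasc⟩
    refine GaussDiagram.not_ascending_of_descending (by omega) (G.sub S) ?_ hoc hasc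
    intro j
    have h1 : (G.sub S).t j < (G.sub S).h j := by
      show ((G.posSet S).orderIsoOfFin (G.posSet_card S)).symm _ <
        ((G.posSet S).orderIsoOfFin (G.posSet_card S)).symm _
      rw [OrderIso.lt_iff_lt, Subtype.mk_lt_mk]
      exact hdesc _
    exact h1
  simp [hneg]
end

section
/- Every one-component ascending two-circle diagram has an arrow leaving the based circle: Let G be a two-circle based Gauss diagram with n ≥ 1 arrows which is one-component and ascending. Then there exists an arrow i of G whose tail t i lies on the first (based) circle and whose head h i lies on the second circle. -/
open Finset

theorem exists_arrow_leaving_based_circle {n p q : ℕ} (hn : 1 ≤ n)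
    (G : GaussDiagram2 n p q) (h1 : G.OneComponent) (h2 : G.Ascending) :
    ∃ i : Fin n, (∃ a : Fin p, G.t i = Sum.inl a) ∧ (∃ b : Fin q, G.h i = Sum.inr b) := by
  classical
  obtain ⟨hp, hq, hcyc⟩ := h1
  have hp0 : 0 < p := hp
  set z0 : Fin p ⊕ Fin q := Sum.inl ⟨0, hp⟩ with hz0
  have htaule : ∀ (y : Fin p ⊕ Fin q) (m : ℕ), (G.sigma)^[m] z0 = y → G.tau y ≤ m := by
    intro y m hm
    have hy : ∃ k, (G.sigma)^[k] (Sum.inl ⟨0, hp⟩) = y := ⟨m, hm⟩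
    unfold GaussDiagram2.tau
    rw [dif_pos hp0, dif_pos hy]
    exact Nat.find_le hm
  have htau : ∀ y : Fin p ⊕ Fin q, (G.sigma)^[G.tau y] z0 = y := by
    intro y
    have hy : ∃ k, (G.sigma)^[k] (Sum.inl ⟨0, hp⟩) = y := hcyc _ _
    unfold GaussDiagram2.tau
    rw [dif_pos hp0, dif_pos hy]
    exact Nat.find_spec hy
  have hexP : ∃ k : ℕ, ∃ b : Fin q, (G.sigma)^[k] z0 = Sum.inr b := by
    obtain ⟨k, hk⟩ := hcyc z0 (Sum.inr ⟨0, hq⟩)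
    exact ⟨k, ⟨0, hq⟩, hk⟩
  set K := Nat.find hexP with hKdef
  obtain ⟨b, hb⟩ := Nat.find_spec hexP
  rw [← hKdef] at hb
  have hK1 : 1 ≤ K := by
    rcases Nat.eq_zero_or_pos K with h0 | h
    · exfalso
      rw [h0] at hb
      simp [z0] at hb
    · exact h
  set x := (G.sigma)^[K - 1] z0 with hx
  have hxK : G.sigma x = Sum.inr b := by
    have hstep : (G.sigma)^[(K - 1) + 1] z0 = G.sigma x := by
      rw [hx, Function.iterate_succ_apply']
    rw [← hstep, Nat.sub_add_cancel hK1]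
    exact hb
  obtain ⟨a, ha⟩ : ∃ a : Fin p, x = Sum.inl a := by
    by_contra hcon
    push_neg at hcon
    obtain ⟨b', hb'⟩ : ∃ b', x = Sum.inr b' := by
      cases hx2 : x with
      | inl a => exact absurd hx2 (hcon a)
      | inr b' => exact ⟨b', rfl⟩
    have hlt : K - 1 < K := Nat.sub_lt hK1 one_pos
    exact Nat.find_min hexP hlt ⟨b', by rw [← hx]; exact hb'⟩
  obtain ⟨c, hc⟩ : ∃ c : Fin q, G.mu x = Sum.inr c := by
    unfold GaussDiagram2.sigma at hxK
    cases hmu : G.mu x with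
    | inl a' => rw [hmu] at hxK; simp [Sum.map] at hxK
    | inr c => exact ⟨c, rfl⟩
  have happ := G.ends.apply_symm_apply x
  rcases he : G.ends.symm x with i | i
  · -- x = t i, mu x = h i
    rw [he] at happ
    have hti : G.t i = x := happ
    have hmu' : G.mu x = G.h i := by
      unfold GaussDiagram2.mu
      rw [he]
      rfl
    exact ⟨i, ⟨a, hti.trans ha⟩, ⟨c, by rw [← hmu', hc]⟩⟩
  · -- x = h i, mu x = t i : contradiction with ascending
    exfalso
    rw [he] at happ
    have hhi : G.h i = x := happ
    have hmu' : G.mu x = G.t i := by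
      unfold GaussDiagram2.mu
      rw [he]
      rfl
    have hti : G.t i = Sum.inr c := by rw [← hmu', hc]
    have hhle : G.tau (G.h i) ≤ K - 1 := by
      rw [hhi]
      exact htaule x (K - 1) hx.symm
    have htlt : G.tau (G.t i) < K := lt_of_lt_of_le (h2 i)
      (le_trans hhle (Nat.sub_le K 1))
    exact Nat.find_min hexP htlt ⟨c, by rw [htau (G.t i), hti]⟩
end

section
/- Vanishing when all connecting arrows point toward the based circle: Let G be a two-circle based Gauss diagram such that every arrow having one endpoint on each circle has its head on the first (based) circle. Then F_k(G) = 0 for every k ≥ 1. -/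
open Finset

namespace GaussDiagram2

variable {n p q : ℕ}

lemma mu_cases (G : GaussDiagram2 n p q) (x : Fin p ⊕ Fin q) :
    (∃ i, x = G.t i ∧ G.mu x = G.h i) ∨ (∃ i, x = G.h i ∧ G.mu x = G.t i) := by
  rcases hE : G.ends.symm x with i | i
  · exact Or.inl ⟨i, by rw [← G.ends.apply_symm_apply x, hE]; rfl,
      by rw [mu, hE]; rfl⟩
  · exact Or.inr ⟨i, by rw [← G.ends.apply_symm_apply x, hE]; rfl,
      by rw [mu, hE]; rfl⟩

lemma not_ascending (G : GaussDiagram2 n p q)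
    (hall : ∀ i : Fin n, (G.t i).isLeft ≠ (G.h i).isLeft → (G.h i).isLeft = true)
    (hoc : G.OneComponent) : ¬ G.Ascending := by
  obtain ⟨hp, hq, hcyc⟩ := hoc
  intro hasc
  have hp0 : 0 < p := hp
  have hex : ∃ m, ((G.sigma)^[m] (Sum.inl ⟨0, hp0⟩ : Fin p ⊕ Fin q)).isRight := by
    obtain ⟨k, hk⟩ := hcyc (Sum.inl ⟨0, hp0⟩) (Sum.inr ⟨0, hq⟩)
    exact ⟨k, by rw [hk]; rfl⟩
  have hmr := Nat.find_spec hex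
  have hm1 : 1 ≤ Nat.find hex := by
    rcases Nat.eq_zero_or_pos (Nat.find hex) with h0 | h
    · rw [h0] at hmr; simp at hmr
    · exact h
  have hxlem := Nat.find_min hex (show Nat.find hex - 1 < Nat.find hex by omega)
  have hxl : ((G.sigma)^[Nat.find hex - 1] (Sum.inl ⟨0, hp0⟩ : Fin p ⊕ Fin q)).isLeft := by
    rcases h : (G.sigma)^[Nat.find hex - 1] (Sum.inl ⟨0, hp0⟩ : Fin p ⊕ Fin q) with a | a
    · rfl
    · simp [h] at hxlem
  have hstep : (G.sigma)^[Nat.find hex] (Sum.inl ⟨0, hp0⟩ : Fin p ⊕ Fin q)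
      = G.sigma ((G.sigma)^[Nat.find hex - 1] (Sum.inl ⟨0, hp0⟩)) := by
    conv_lhs => rw [show Nat.find hex = (Nat.find hex - 1) + 1 by omega]
    rw [Function.iterate_succ_apply']
  set x : Fin p ⊕ Fin q := (G.sigma)^[Nat.find hex - 1] (Sum.inl ⟨0, hp0⟩) with hxdef
  have hmux : (G.mu x).isRight := by
    rw [hstep] at hmr
    unfold sigma at hmr
    rcases h : G.mu x with a | a
    · rw [h] at hmr; simp [Sum.map] at hmr
    · rfl
  rcases G.mu_cases x with ⟨i, hxt, hmu⟩ | ⟨i, hxh, hmu⟩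
  · -- x = t i (left), mu x = h i (right): contradicts hall
    have h1 : (G.t i).isLeft ≠ (G.h i).isLeft := by
      rw [← hxt, ← hmu]
      rw [Sum.isRight_iff] at hmux
      obtain ⟨b, hb⟩ := hmux
      rw [Sum.isLeft_iff] at hxl
      obtain ⟨a, ha⟩ := hxl
      rw [hb]
      rw [ha]
      simp
    have h2 := hall i h1
    rw [← hmu] at h2
    rw [Sum.isRight_iff] at hmux
    obtain ⟨b, hb⟩ := hmux
    rw [hb] at h2
    simp at h2
  · -- x = h i (left), mu x = t i (right)
    have htx : G.tau x ≤ Nat.find hex - 1 := by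
      rw [tau, dif_pos hp0, dif_pos ⟨Nat.find hex - 1, hxdef.symm⟩]
      exact Nat.find_le hxdef.symm
    have htt : Nat.find hex ≤ G.tau (G.t i) := by
      obtain ⟨k, hk⟩ := hcyc (Sum.inl ⟨0, hp0⟩) (G.t i)
      rw [tau, dif_pos hp0, dif_pos ⟨k, hk⟩]
      by_contra hlt
      push_neg at hlt
      have hspec := Nat.find_spec (⟨k, hk⟩ : ∃ k,
          (G.sigma)^[k] (Sum.inl ⟨0, hp0⟩ : Fin p ⊕ Fin q) = G.t i)
      have hmin2 := Nat.find_min hex hlt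
      rw [hspec, ← hmu] at hmin2
      exact hmin2 hmux
    have := hasc i
    rw [← hxh] at this
    omega

lemma renum_isLeft (E : Finset (Fin p ⊕ Fin q)) (x : Fin p ⊕ Fin q) (hx : x ∈ E) :
    (renum E x hx).isLeft = x.isLeft := by cases x <;> rfl

lemma hall_sub (G : GaussDiagram2 n p q)
    (hall : ∀ i : Fin n, (G.t i).isLeft ≠ (G.h i).isLeft → (G.h i).isLeft = true)
    (S : Finset (Fin n)) :
    ∀ j, (((G.sub S).t j).isLeft ≠ ((G.sub S).h j).isLeft) →
      ((G.sub S).h j).isLeft = true := by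
  intro j hne
  have h1 : ((G.sub S).t j).isLeft = (G.t (S.orderIsoOfFin rfl j)).isLeft :=
    renum_isLeft _ _ _
  have h2 : ((G.sub S).h j).isLeft = (G.h (S.orderIsoOfFin rfl j)).isLeft :=
    renum_isLeft _ _ _
  rw [h1, h2] at hne
  rw [h2]
  exact hall _ hne

end GaussDiagram2

theorem F_vanish_of_arrows_toward_based_circle {n p q : ℕ} (G : GaussDiagram2 n p q)
    (hall : ∀ i : Fin n, (G.t i).isLeft ≠ (G.h i).isLeft → (G.h i).isLeft = true)
    (k : ℕ) (hk : 1 ≤ k) :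
    G.F k = 0 := by
  rw [GaussDiagram2.F]
  apply Finset.sum_eq_zero
  intro S _
  rw [if_neg]
  rintro ⟨-, hoc, hasc⟩
  exact (G.sub S).not_ascending (G.hall_sub hall S) hoc hasc
end

section
/- Parity on one circle: If a subset S of the arrows of a one-circle based Gauss diagram G is one-component, then the cardinality of S is even. In particular, if G itself is one-component then its number of arrows n is even. -/
open Finset

/-!
Write `σ = ρ ∘ μ`, where `ρ : x ↦ x + 1` is a cycle of length `2n` and `μ` is a product of
`n` disjoint transpositions. If `σ` is also a single cycle of length `2n`, then
`sign σ = sign ρ = -1`, hence `(-1)^n = sign μ = 1` and `n` is even. The statement about a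
subset `S` is this applied to the sub-diagram on `S`.
-/

section
open Equiv Equiv.Perm

theorem Equiv.Perm.sign_sumComm_self (α : Type*) [Fintype α] [DecidableEq α] :
    sign (sumComm α α) = (-1) ^ Fintype.card α := by
  have hconj : sumComm α α =
      (boolProdEquivSum α).permCongr (prodCongrLeft fun _ => swap false true) := by
    ext (a | a) <;> simp [permCongr_apply]
  rw [hconj, sign_permCongr, sign_prodCongrLeft, sign_swap Bool.false_ne_true, prod_const,
    card_univ]

theorem Equiv.Perm.sign_of_forall_exists_iterate_eq {α : Type*} [Fintype α] [DecidableEq α]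
    [Nontrivial α] {f : Perm α} (hf : ∀ x y, ∃ k, f^[k] x = y) :
    sign f = -(-1) ^ Fintype.card α := by
  have hon : f.IsCycleOn .univ := ⟨Set.bijOn_univ.2 f.bijective, fun x _ y _ => by
    obtain ⟨k, hk⟩ := hf x y
    exact ⟨k, by rwa [zpow_natCast, ← iterate_eq_pow]⟩⟩
  have hcyc : f.IsCycle :=
    isCycle_iff_exists_isCycleOn.2 ⟨.univ, Set.nontrivial_univ, hon, fun _ _ => trivial⟩
  have hsupp : f.support = univ :=
    eq_univ_of_forall fun x => mem_support.2 (hon.apply_ne Set.nontrivial_univ trivial)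
  rw [hcyc.sign, hsupp, card_univ]

namespace GaussDiagram

variable {n : ℕ}

theorem sigma_eq_finRotate_mul (G : GaussDiagram n) :
    G.sigma = ⇑(finRotate (2 * n) * G.ends.permCongr (sumComm _ _)) := by
  funext x
  have : NeZero (2 * n) := ⟨x.pos.ne'⟩
  ext
  simp [sigma, mu, finRotate_apply, permCongr_apply, Fin.val_add]

theorem even_of_oneComponent (G : GaussDiagram n) (h : G.OneComponent) : Even n := by
  rcases Nat.eq_zero_or_pos n with rfl | hn
  · exact Even.zero
  have : Nontrivial (Fin (2 * n)) := Fin.nontrivial_iff_two_le.2 (by omega)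
  have hσ : Perm.sign (finRotate (2 * n) * G.ends.permCongr (sumComm _ _)) = -1 := by
    rw [sign_of_forall_exists_iterate_eq (G.sigma_eq_finRotate_mul ▸ h), Fintype.card_fin,
      (even_two_mul n).neg_one_pow]
  have hρ : Perm.sign (finRotate (2 * n)) = -1 := by
    rw [sign_finRotate, Odd.neg_one_pow ⟨n - 1, by omega⟩]
  rw [map_mul, hρ, sign_permCongr, sign_sumComm_self, Fintype.card_fin, neg_one_mul,
    neg_inj] at hσ
  exact (neg_one_pow_eq_one_iff_even (by decide)).1 hσ

end GaussDiagram

end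

theorem parity_one_circle {n : ℕ} (G : GaussDiagram n) :
    (∀ S : Finset (Fin n), G.OneComponentSub S → Even S.card) ∧
    (G.OneComponent → Even n) :=
  ⟨fun S hS => (G.sub S).even_of_oneComponent hS, G.even_of_oneComponent⟩
end

section
/- Invariance under the first Reidemeister move on Gauss diagrams: Let G be a one-circle based Gauss diagram with n ≥ 1 arrows containing an arrow x whose two endpoints occupy consecutive positions p and p+1 for some 0 ≤ p ≤ 2n−2 (in either orientation and with either sign). Let G' be the one-circle based Gauss diagram with n−1 arrows obtained from G by deleting x and renumbering the remaining 2n−2 endpoint positions preserving their order. Then F_k(G) = F_k(G') for every k ≥ 0. -/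
open Finset

/-- Renumbering of positions after deleting the positions in `R`:
a remaining position `z` gets the new number `z - #{w ∈ R | w < z}`. -/
def delRenum (R : Finset ℕ) (z : ℕ) : ℕ := z - (R.filter (· < z)).card

section AuxLemmas

lemma delRenum_pair_eq (p z : ℕ) (hz : z ≠ p) (hz' : z ≠ p + 1) :
    delRenum {p, p + 1} z = if z < p then z else z - 2 := by
  unfold delRenum
  rcases lt_trichotomy z p with h | h | h
  · rw [if_pos h]
    have he : ({p, p + 1} : Finset ℕ).filter (· < z) = ∅ := by
      ext w; simp only [mem_filter, mem_insert, mem_singleton, notMem_empty, iff_false,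
        not_and]
      rintro (rfl | rfl) <;> omega
    simp [he]
  · exact absurd h hz
  · rw [if_neg (by omega)]
    have he : ({p, p + 1} : Finset ℕ).filter (· < z) = {p, p + 1} := by
      ext w; simp only [mem_filter, mem_insert, mem_singleton, and_iff_left_iff_imp]
      rintro (rfl | rfl) <;> omega
    rw [he]
    have hc : ({p, p + 1} : Finset ℕ).card = 2 := by
      rw [card_insert_of_notMem (by simp), card_singleton]
    rw [hc]

lemma delRenum_pair_lt {p z w : ℕ} (hz : z ≠ p) (hz' : z ≠ p + 1) (hw : w ≠ p)
    (hw' : w ≠ p + 1) (h : z < w) : delRenum {p, p + 1} z < delRenum {p, p + 1} w := by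
  rw [delRenum_pair_eq p z hz hz', delRenum_pair_eq p w hw hw']
  split_ifs <;> omega

/-- Transfer the relevant properties along an equality of Gauss diagrams given
componentwise. -/
lemma GaussDiagram.congr_props {m m' : ℕ} (e : m = m') (G₁ : GaussDiagram m)
    (G₂ : GaussDiagram m')
    (ht : ∀ j : Fin m, (G₁.t j : ℕ) = (G₂.t (Fin.cast e j) : ℕ))
    (hh : ∀ j : Fin m, (G₁.h j : ℕ) = (G₂.h (Fin.cast e j) : ℕ))
    (he : ∀ j : Fin m, G₁.ε j = G₂.ε (Fin.cast e j)) :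
    (G₁.OneComponent ↔ G₂.OneComponent) ∧ (G₁.Ascending ↔ G₂.Ascending) := by
  subst e
  have hG : G₁ = G₂ := by
    have h1 : G₁.t = G₂.t := funext fun j => Fin.ext (ht j)
    have h2 : G₁.h = G₂.h := funext fun j => Fin.ext (hh j)
    have h3 : G₁.ε = G₂.ε := funext fun j => he j
    cases G₁; cases G₂
    simp only at h1 h2 h3
    subst h1; subst h2; subst h3
    rfl
  rw [hG]
  exact ⟨Iff.rfl, Iff.rfl⟩

lemma GaussDiagram.mu_t_s8 {m : ℕ} (H : GaussDiagram m) (j : Fin m) : H.mu (H.t j) = H.h j := by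
  have h1 : H.ends.symm (H.t j) = Sum.inl j := by
    apply H.ends.injective
    rw [Equiv.apply_symm_apply]
    rfl
  rw [GaussDiagram.mu, h1]
  rfl

lemma GaussDiagram.mu_h_s8 {m : ℕ} (H : GaussDiagram m) (j : Fin m) : H.mu (H.h j) = H.t j := by
  have h1 : H.ends.symm (H.h j) = Sum.inr j := by
    apply H.ends.injective
    rw [Equiv.apply_symm_apply]
    rfl
  rw [GaussDiagram.mu, h1]
  rfl

lemma orderEmbOfFin_image_strictMono {α β : Type*} [LinearOrder α] [LinearOrder β]
    [DecidableEq β] {f : α → β} (hf : StrictMono f) (s : Finset α) {k : ℕ} (h : s.card = k)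
    (h2 : (s.image f).card = k) (j : Fin k) :
    (s.image f).orderEmbOfFin h2 j = f (s.orderEmbOfFin h j) := by
  have hu := Finset.orderEmbOfFin_unique h2 (f := fun j => f (s.orderEmbOfFin h j))
    (fun j => Finset.mem_image_of_mem f (Finset.orderEmbOfFin_mem s h j))
    (hf.comp (s.orderEmbOfFin h).strictMono)
  exact (congrFun hu j).symm

end AuxLemmas

theorem F_reidemeister_one {n : ℕ} (G : GaussDiagram (n + 1)) (x : Fin (n + 1)) (p : ℕ)
    (hp : p + 1 ≤ 2 * (n + 1) - 1)
    (hends : ((G.t x : ℕ) = p ∧ (G.h x : ℕ) = p + 1) ∨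
      ((G.t x : ℕ) = p + 1 ∧ (G.h x : ℕ) = p))
    (G' : GaussDiagram n)
    (h't : ∀ i : Fin n, (G'.t i : ℕ) = delRenum {p, p + 1} (G.t (x.succAbove i) : ℕ))
    (h'h : ∀ i : Fin n, (G'.h i : ℕ) = delRenum {p, p + 1} (G.h (x.succAbove i) : ℕ))
    (h'e : ∀ i : Fin n, G'.ε i = G.ε (x.succAbove i))
    (k : ℕ) :
    G.F k = G'.F k := by
  classical
  have hsinj : Function.Injective x.succAbove := Fin.succAbove_right_injective
  -- values of endpoints of arrows other than `x` avoid `p` and `p+1`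
  have hvalne : ∀ z : Fin (2 * (n + 1)), z ≠ G.t x → z ≠ G.h x →
      (z : ℕ) ≠ p ∧ (z : ℕ) ≠ p + 1 := by
    intro z h1 h2
    rcases hends with ⟨e1, e2⟩ | ⟨e1, e2⟩
    · exact ⟨fun hz => h1 (Fin.ext (by rw [hz, e1])), fun hz => h2 (Fin.ext (by rw [hz, e2]))⟩
    · exact ⟨fun hz => h2 (Fin.ext (by rw [hz, e2])), fun hz => h1 (Fin.ext (by rw [hz, e1]))⟩
  have havoidt : ∀ i : Fin n,
      (G.t (x.succAbove i) : ℕ) ≠ p ∧ (G.t (x.succAbove i) : ℕ) ≠ p + 1 := fun i =>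
    hvalne _ (fun e => Fin.succAbove_ne x i (G.t_injective e)) (fun e => G.t_ne_h _ _ e)
  have havoidh : ∀ i : Fin n,
      (G.h (x.succAbove i) : ℕ) ≠ p ∧ (G.h (x.succAbove i) : ℕ) ≠ p + 1 := fun i =>
    hvalne _ (fun e => G.t_ne_h _ _ e.symm) (fun e => Fin.succAbove_ne x i (G.h_injective e))
  have hbound : ∀ z : Fin (2 * (n + 1)), (z : ℕ) ≠ p → (z : ℕ) ≠ p + 1 →
      delRenum {p, p + 1} (z : ℕ) < 2 * n := by
    intro z h1 h2
    have hzlt := z.isLt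
    rw [delRenum_pair_eq p _ h1 h2]
    split_ifs <;> omega
  -- subsets containing `x` contribute nothing
  have hvan : ∀ S : Finset (Fin (n + 1)), x ∈ S → ¬ G.OneComponentSub S := by
    intro S hxS hOC
    have hp2 : p < 2 * (n + 1) := by omega
    have hp1 : p + 1 < 2 * (n + 1) := by omega
    have hPQ : (G.t x = ⟨p, hp2⟩ ∧ G.h x = ⟨p + 1, hp1⟩) ∨
        (G.t x = ⟨p + 1, hp1⟩ ∧ G.h x = ⟨p, hp2⟩) := by
      rcases hends with ⟨e1, e2⟩ | ⟨e1, e2⟩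
      · exact Or.inl ⟨Fin.ext e1, Fin.ext e2⟩
      · exact Or.inr ⟨Fin.ext e1, Fin.ext e2⟩
    have hPmem : (⟨p, hp2⟩ : Fin (2 * (n + 1))) ∈ G.posSet S := by
      rcases hPQ with ⟨e1, -⟩ | ⟨-, e2⟩
      · rw [← e1]; exact G.mem_posSet_t hxS
      · rw [← e2]; exact G.mem_posSet_h hxS
    have hQmem : (⟨p + 1, hp1⟩ : Fin (2 * (n + 1))) ∈ G.posSet S := by
      rcases hPQ with ⟨-, e2⟩ | ⟨e1, -⟩
      · rw [← e2]; exact G.mem_posSet_h hxS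
      · rw [← e1]; exact G.mem_posSet_t hxS
    have hE := G.posSet_card S
    set α := ((G.posSet S).orderIsoOfFin hE).symm ⟨⟨p, hp2⟩, hPmem⟩ with hαdef
    set β := ((G.posSet S).orderIsoOfFin hE).symm ⟨⟨p + 1, hp1⟩, hQmem⟩ with hβdef
    have hab : α < β := by
      rw [hαdef, hβdef, ((G.posSet S).orderIsoOfFin hE).symm.lt_iff_lt]
      exact Subtype.mk_lt_mk.mpr (by simp [Fin.lt_def])
    have hablt : (α : ℕ) < (β : ℕ) := hab
    have hsucc : (β : ℕ) = (α : ℕ) + 1 := by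
      by_contra hne
      have h1 : (α : ℕ) + 1 < (β : ℕ) := by omega
      have hg1 : α < (⟨(α : ℕ) + 1, lt_trans h1 β.isLt⟩ : Fin (2 * S.card)) := by
        rw [Fin.lt_def]; simp
      have hg2 : (⟨(α : ℕ) + 1, lt_trans h1 β.isLt⟩ : Fin (2 * S.card)) < β := by
        rw [Fin.lt_def]; simpa using h1
      have e1 : (G.posSet S).orderIsoOfFin hE α = ⟨⟨p, hp2⟩, hPmem⟩ := by
        rw [hαdef, OrderIso.apply_symm_apply]
      have e2 : (G.posSet S).orderIsoOfFin hE β = ⟨⟨p + 1, hp1⟩, hQmem⟩ := by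
        rw [hβdef, OrderIso.apply_symm_apply]
      have l1 : (⟨⟨p, hp2⟩, hPmem⟩ : {a // a ∈ G.posSet S}) <
          (G.posSet S).orderIsoOfFin hE ⟨(α : ℕ) + 1, lt_trans h1 β.isLt⟩ := by
        rw [← e1]; exact ((G.posSet S).orderIsoOfFin hE).lt_iff_lt.mpr hg1
      have l2 : (G.posSet S).orderIsoOfFin hE ⟨(α : ℕ) + 1, lt_trans h1 β.isLt⟩ <
          (⟨⟨p + 1, hp1⟩, hQmem⟩ : {a // a ∈ G.posSet S}) := by
        rw [← e2]; exact ((G.posSet S).orderIsoOfFin hE).lt_iff_lt.mpr hg2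
      have l1' : p < (((G.posSet S).orderIsoOfFin hE ⟨(α : ℕ) + 1, lt_trans h1 β.isLt⟩ :
          Fin (2 * (n + 1))) : ℕ) := Subtype.coe_lt_coe.mpr l1
      have l2' : (((G.posSet S).orderIsoOfFin hE ⟨(α : ℕ) + 1, lt_trans h1 β.isLt⟩ :
          Fin (2 * (n + 1))) : ℕ) < p + 1 := Subtype.coe_lt_coe.mpr l2
      omega
    -- the arrow `x` inside the sub-diagram
    set j0 := (S.orderIsoOfFin rfl).symm ⟨x, hxS⟩ with hj0def
    have ej0 : ((S.orderIsoOfFin rfl j0 : {a // a ∈ S}) : Fin (n + 1)) = x := by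
      rw [hj0def]
      exact congrArg Subtype.val ((S.orderIsoOfFin rfl).apply_symm_apply ⟨x, hxS⟩)
    have hmu : (G.sub S).mu β = α := by
      have ht0 : (G.sub S).t j0 =
          ((G.posSet S).orderIsoOfFin hE).symm ⟨G.t x, ej0 ▸ G.mem_posSet_t
            (S.orderIsoOfFin rfl j0).2⟩ := by
        show ((G.posSet S).orderIsoOfFin (G.posSet_card S)).symm
            ⟨G.t ((S.orderIsoOfFin rfl j0 : {a // a ∈ S}) : Fin (n + 1)),
              G.mem_posSet_t (S.orderIsoOfFin rfl j0).2⟩ = _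
        exact congrArg _ (Subtype.ext (congrArg G.t ej0))
      have hh0 : (G.sub S).h j0 =
          ((G.posSet S).orderIsoOfFin hE).symm ⟨G.h x, ej0 ▸ G.mem_posSet_h
            (S.orderIsoOfFin rfl j0).2⟩ := by
        show ((G.posSet S).orderIsoOfFin (G.posSet_card S)).symm
            ⟨G.h ((S.orderIsoOfFin rfl j0 : {a // a ∈ S}) : Fin (n + 1)),
              G.mem_posSet_h (S.orderIsoOfFin rfl j0).2⟩ = _
        exact congrArg _ (Subtype.ext (congrArg G.h ej0))
      rcases hPQ with ⟨e1, e2⟩ | ⟨e1, e2⟩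
      · have hhb : (G.sub S).h j0 = β := by
          rw [hh0, hβdef]; exact congrArg _ (Subtype.ext e2)
        have hta : (G.sub S).t j0 = α := by
          rw [ht0, hαdef]; exact congrArg _ (Subtype.ext e1)
        rw [← hhb, (G.sub S).mu_h_s8, hta]
      · have htb : (G.sub S).t j0 = β := by
          rw [ht0, hβdef]; exact congrArg _ (Subtype.ext e1)
        have hha : (G.sub S).h j0 = α := by
          rw [hh0, hαdef]; exact congrArg _ (Subtype.ext e2)
        rw [← htb, (G.sub S).mu_t_s8, hha]
    have hfix : (G.sub S).sigma β = β := by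
      rw [GaussDiagram.sigma]
      apply Fin.ext
      simp only [hmu]
      rw [← hsucc]
      exact Nat.mod_eq_of_lt β.isLt
    obtain ⟨kk, hkk⟩ := hOC β α
    rw [Function.iterate_fixed hfix] at hkk
    rw [hkk] at hsucc
    omega
  -- the correspondence of sub-diagrams for subsets avoiding `x`
  have key : ∀ S' : Finset (Fin n),
      (G.OneComponentSub (S'.image x.succAbove) ↔ G'.OneComponentSub S') ∧
      (G.AscendingSub (S'.image x.succAbove) ↔ G'.AscendingSub S') := by
    intro S'
    have hc : (S'.image x.succAbove).card = S'.card := card_image_of_injective _ hsinj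
    have harr : ∀ j : Fin (S'.image x.succAbove).card,
        (((S'.image x.succAbove).orderIsoOfFin rfl j : {a // a ∈ S'.image x.succAbove}) :
          Fin (n + 1))
          = x.succAbove ((S'.orderIsoOfFin rfl (Fin.cast hc j) : {a // a ∈ S'}) : Fin n) := by
      intro j
      have h1 : (((S'.image x.succAbove).orderIsoOfFin rfl j :
          {a // a ∈ S'.image x.succAbove}) : Fin (n + 1))
          = (S'.image x.succAbove).orderEmbOfFin hc (Fin.cast hc j) := rfl
      rw [h1, orderEmbOfFin_image_strictMono (Fin.strictMono_succAbove x) S' rfl hc]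
      rfl
    have hE : (G.posSet (S'.image x.succAbove)).card = 2 * S'.card := by
      rw [G.posSet_card, hc]
    have hE' : (G'.posSet S').card = 2 * S'.card := G'.posSet_card S'
    have hEavoid : ∀ z : Fin (2 * (n + 1)), z ∈ G.posSet (S'.image x.succAbove) →
        (z : ℕ) ≠ p ∧ (z : ℕ) ≠ p + 1 := by
      intro z hz
      rw [GaussDiagram.posSet, mem_union] at hz
      rcases hz with hz | hz <;> rw [mem_image] at hz <;> obtain ⟨i, hi, rfl⟩ := hz <;>
        obtain ⟨i', hi', rfl⟩ := mem_image.mp hi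
      · exact havoidt i'
      · exact havoidh i'
    have hmemE' : ∀ z : Fin (2 * (n + 1)), z ∈ G.posSet (S'.image x.succAbove) →
        ∀ w : Fin (2 * n),
        (w : ℕ) = delRenum {p, p + 1} (z : ℕ) → w ∈ G'.posSet S' := by
      intro z hz w hw
      rw [GaussDiagram.posSet, mem_union] at hz
      rw [GaussDiagram.posSet, mem_union]
      rcases hz with hz | hz <;> rw [mem_image] at hz <;> obtain ⟨i, hi, rfl⟩ := hz <;>
        obtain ⟨i', hi', rfl⟩ := mem_image.mp hi
      · exact Or.inl (mem_image.mpr ⟨i', hi', Fin.ext (by rw [h't i', ← hw])⟩)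
      · exact Or.inr (mem_image.mpr ⟨i', hi', Fin.ext (by rw [h'h i', ← hw])⟩)
    -- the renumbering map between the position sets
    have hD : ∀ j : Fin (2 * S'.card), (G'.posSet S').orderEmbOfFin hE' j =
        ⟨delRenum {p, p + 1}
            (((G.posSet (S'.image x.succAbove)).orderEmbOfFin hE j : Fin (2 * (n + 1))) : ℕ),
          hbound _ (hEavoid _ (Finset.orderEmbOfFin_mem _ hE j)).1
            (hEavoid _ (Finset.orderEmbOfFin_mem _ hE j)).2⟩ := by
      have hu := Finset.orderEmbOfFin_unique hE'
        (f := fun j : Fin (2 * S'.card) =>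
          (⟨delRenum {p, p + 1}
              (((G.posSet (S'.image x.succAbove)).orderEmbOfFin hE j : Fin (2 * (n + 1))) : ℕ),
            hbound _ (hEavoid _ (Finset.orderEmbOfFin_mem _ hE j)).1
              (hEavoid _ (Finset.orderEmbOfFin_mem _ hE j)).2⟩ : Fin (2 * n)))
        (fun j => hmemE' _ (Finset.orderEmbOfFin_mem _ hE j) _ rfl)
        (fun a b hab => by
          have h1 := ((G.posSet (S'.image x.succAbove)).orderEmbOfFin hE).strictMono hab
          have ha := hEavoid _ (Finset.orderEmbOfFin_mem _ hE a)
          have hb := hEavoid _ (Finset.orderEmbOfFin_mem _ hE b)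
          exact Fin.mk_lt_mk.mpr (delRenum_pair_lt ha.1 ha.2 hb.1 hb.2 h1))
      intro j
      exact (congrFun hu j).symm
    -- position index correspondence
    have hpos : ∀ z : Fin (2 * (n + 1)), ∀ hz : z ∈ G.posSet (S'.image x.succAbove),
        ∀ w : Fin (2 * n), ∀ hw : w ∈ G'.posSet S',
        (w : ℕ) = delRenum {p, p + 1} (z : ℕ) →
        ((((G'.posSet S').orderIsoOfFin hE').symm ⟨w, hw⟩ : Fin (2 * S'.card)) : ℕ) =
          ((((G.posSet (S'.image x.succAbove)).orderIsoOfFin hE).symm ⟨z, hz⟩ :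
            Fin (2 * S'.card)) : ℕ) := by
      intro z hz w hw hzw
      have h1 : (G.posSet (S'.image x.succAbove)).orderEmbOfFin hE
          (((G.posSet (S'.image x.succAbove)).orderIsoOfFin hE).symm ⟨z, hz⟩) = z :=
        congrArg Subtype.val
          (((G.posSet (S'.image x.succAbove)).orderIsoOfFin hE).apply_symm_apply ⟨z, hz⟩)
      have h2 : (G'.posSet S').orderEmbOfFin hE'
          (((G.posSet (S'.image x.succAbove)).orderIsoOfFin hE).symm ⟨z, hz⟩) = w := by
        rw [hD]
        apply Fin.ext
        rw [hzw]
        exact congrArg (fun u : Fin (2 * (n + 1)) => delRenum {p, p + 1} (u : ℕ)) h1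
      have h4 : ((G'.posSet S').orderIsoOfFin hE').symm ⟨w, hw⟩ =
          ((G.posSet (S'.image x.succAbove)).orderIsoOfFin hE).symm ⟨z, hz⟩ := by
        rw [← ((G'.posSet S').orderIsoOfFin hE').symm_apply_apply
          (((G.posSet (S'.image x.succAbove)).orderIsoOfFin hE).symm ⟨z, hz⟩)]
        exact congrArg _ (Subtype.ext h2.symm)
      exact congrArg Fin.val h4
    -- apply the congruence lemma
    exact GaussDiagram.congr_props hc (G.sub (S'.image x.succAbove)) (G'.sub S')
      (fun j => by
        exact (hpos _ (G.mem_posSet_t ((S'.image x.succAbove).orderIsoOfFin rfl j).2) _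
          (G'.mem_posSet_t (S'.orderIsoOfFin rfl (Fin.cast hc j)).2)
          (by rw [h't]
              exact congrArg (fun u => delRenum {p, p + 1} (G.t u : ℕ)) (harr j).symm)).symm)
      (fun j => by
        exact (hpos _ (G.mem_posSet_h ((S'.image x.succAbove).orderIsoOfFin rfl j).2) _
          (G'.mem_posSet_h (S'.orderIsoOfFin rfl (Fin.cast hc j)).2)
          (by rw [h'h]
              exact congrArg (fun u => delRenum {p, p + 1} (G.h u : ℕ)) (harr j).symm)).symm)
      (fun j => by
        show G.ε _ = G'.ε _
        rw [h'e, harr j])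
  -- now the sum manipulation
  rw [GaussDiagram.F, GaussDiagram.F]
  have hterm : ∀ S ∈ (univ : Finset (Finset (Fin (n + 1)))),
      (if S.card = k ∧ G.OneComponentSub S ∧ G.AscendingSub S then ∏ i ∈ S, G.ε i else 0) ≠ 0
        → x ∉ S := by
    intro S _ hS hxS
    apply hS
    rw [if_neg]
    rintro ⟨-, h2, -⟩
    exact hvan S hxS h2
  rw [← Finset.sum_filter_of_ne hterm]
  have himg : (univ : Finset (Finset (Fin (n + 1)))).filter (fun S => x ∉ S)
      = (univ : Finset (Finset (Fin n))).image (fun S' => S'.image x.succAbove) := by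
    ext S
    simp only [mem_filter, mem_univ, true_and, mem_image]
    constructor
    · intro hxS
      refine ⟨univ.filter (fun j => x.succAbove j ∈ S), ?_⟩
      ext i
      simp only [mem_image, mem_filter, mem_univ, true_and]
      constructor
      · rintro ⟨j, hj, rfl⟩; exact hj
      · intro hi
        have hix : i ≠ x := fun e => hxS (e ▸ hi)
        obtain ⟨j, rfl⟩ := Fin.exists_succAbove_eq hix
        exact ⟨j, hi, rfl⟩
    · rintro ⟨S', rfl⟩ hxmem
      obtain ⟨j, -, hj⟩ := mem_image.mp hxmem
      exact Fin.succAbove_ne x j hj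
  rw [himg, Finset.sum_image (fun a _ b _ h => Finset.image_injective hsinj h)]
  apply Finset.sum_congr rfl
  intro S' _
  by_cases hcond : S'.card = k ∧ G'.OneComponentSub S' ∧ G'.AscendingSub S'
  · rw [if_pos, if_pos hcond]
    · rw [Finset.prod_image (fun a _ b _ h => hsinj h)]
      exact Finset.prod_congr rfl (fun i _ => (h'e i).symm)
    · exact ⟨by rw [card_image_of_injective _ hsinj]; exact hcond.1,
        (key S').1.mpr hcond.2.1, (key S').2.mpr hcond.2.2⟩
  · rw [if_neg, if_neg hcond]
    rintro ⟨h1, h2, h3⟩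
    refine hcond ⟨?_, (key S').1.mp h2, (key S').2.mp h3⟩
    rw [card_image_of_injective _ hsinj] at h1
    exact h1
end
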